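/- arXiv:1312.6716 — 6 statements merged into one kernel-verified Lean document; each statement's English description precedes it below -/
import Mathlib

section
/- There exists u with |A^{α/2}u| < ∞ for every α ∈ ℕ such that for every σ > 0 and every c₀ ∈ ℝ there exists α ∈ ℕ with |A^{α/2}u|² > c₀ e^{σ α²} ν² κ₀^{2α}; that is, the union ∪_{σ>0} C(σ) is a proper subset of C^∞([0,L]²) ∩ H. -/
noncomputable section

abbrev Vc : Type := EuclideanSpace ℂ (Fin 2)

/-- Euclidean norm of a lattice point `k ∈ ℤ²`. -/
def knorm (k : ℤ × ℤ) : ℝ := Real.sqrt ((k.1 : ℝ) ^ 2 + (k.2 : ℝ) ^ 2)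

/-- The reality condition `û(-k) = conj (û(k))`. -/
def IsRealCond (u : ℤ × ℤ → Vc) : Prop :=
  ∀ k : ℤ × ℤ, ∀ i : Fin 2, u (-k) i = starRingEnd ℂ (u k i)

/-- Divergence-free condition `k ⬝ û(k) = 0`. -/
def DivFree (u : ℤ × ℤ → Vc) : Prop :=
  ∀ k : ℤ × ℤ, (k.1 : ℂ) * u k 0 + (k.2 : ℂ) * u k 1 = 0

/-- Membership in the Fourier model of the phase space `H`. -/
def InH (u : ℤ × ℤ → Vc) : Prop := u 0 = 0 ∧ IsRealCond u ∧ DivFree u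

/-- `|A^{α/2} u|²  =  L² Σ_{k≠0} (κ₀|k|)^{2α} |û(k)|²` for natural `α`. -/
def sqA (L κ₀ : ℝ) (u : ℤ × ℤ → Vc) (α : ℕ) : ℝ :=
  L ^ 2 * ∑' k : ℤ × ℤ, (κ₀ * knorm k) ^ (2 * α) * ‖u k‖ ^ 2

/-- Finiteness of `|A^{α/2}u|` for natural `α`. -/
def SummableA (κ₀ : ℝ) (u : ℤ × ℤ → Vc) (α : ℕ) : Prop :=
  Summable fun k : ℤ × ℤ => (κ₀ * knorm k) ^ (2 * α) * ‖u k‖ ^ 2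

/-- The class `C(σ)`. -/
def InC (L κ₀ ν σ : ℝ) (u : ℤ × ℤ → Vc) : Prop :=
  (∀ α : ℕ, SummableA κ₀ u α) ∧
  ∃ c₀ : ℝ, ∀ α : ℕ,
    sqA L κ₀ u α ≤ c₀ * Real.exp (σ * (α : ℝ) ^ 2) * ν ^ 2 * κ₀ ^ (2 * α)

/-- The summand of `|u|_b²`. -/
def ebTerm (b : ℝ) (u : ℤ × ℤ → Vc) (k : ℤ × ℤ) : ℝ :=
  Real.exp (2 * b * (Real.log (knorm k + Real.exp 1)) ^ 2) * ‖u k‖ ^ 2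

/-- `|u|_b² = L² Σ_{k≠0} e^{2b(ln(|k|+e))²} |û(k)|²`. -/
def ebSq (L b : ℝ) (u : ℤ × ℤ → Vc) : ℝ := L ^ 2 * ∑' k : ℤ × ℤ, ebTerm b u k

/-!
The counterexample is lacunary: `û` lives on the frequencies `(±2^{m²}, 0)`, with `|û|² = 2^{-m³}`
there. For fixed `α` the weighted terms `2^{2αm² - m³}` decay geometrically in `m`, so every
`|A^{α/2}u|` is finite; but the single term `m = α` already contributes `κ₀^{2α} 2^{α³}`, and
`2^{α³}` eventually beats `c₀ e^{σα²}` whatever `σ` and `c₀` are.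
-/

open Real

def lacunaryFreq (p : ℤˣ × ℕ) : ℤ × ℤ := ((p.1 : ℤ) * 2 ^ p.2 ^ 2, 0)

def lacunaryAmplitude (m : ℕ) : ℝ := √((2 ^ m ^ 3)⁻¹)

def lacunaryField : ℤ × ℤ → Vc :=
  Function.extend lacunaryFreq (fun p => EuclideanSpace.single 1 (lacunaryAmplitude p.2 : ℂ)) 0

lemma abs_fst_lacunaryFreq (p : ℤˣ × ℕ) : |(lacunaryFreq p).1| = 2 ^ p.2 ^ 2 := by
  simp [lacunaryFreq, abs_mul, Int.isUnit_iff_abs_eq.mp p.1.isUnit]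

lemma lacunaryFreq_injective : Function.Injective lacunaryFreq := by
  rintro ⟨s, m⟩ ⟨t, n⟩ h
  have hmn : m = n := by
    have := congrArg (fun k => |Prod.fst k|) h
    simp only [abs_fst_lacunaryFreq] at this
    exact Nat.pow_left_injective two_ne_zero (pow_right_injective₀ two_pos (by norm_num) this)
  subst hmn
  simpa [lacunaryFreq, Units.ext_iff] using h

lemma neg_lacunaryFreq (p : ℤˣ × ℕ) : -lacunaryFreq p = lacunaryFreq (-p.1, p.2) := by
  simp [lacunaryFreq]

lemma knorm_lacunaryFreq (p : ℤˣ × ℕ) : knorm (lacunaryFreq p) = 2 ^ p.2 ^ 2 := by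
  have h : ((lacunaryFreq p).1 : ℝ) ^ 2 = (2 ^ p.2 ^ 2) ^ 2 := by
    rw [← sq_abs, ← Int.cast_abs, abs_fst_lacunaryFreq]; push_cast; rfl
  rw [knorm, h, show (lacunaryFreq p).2 = 0 from rfl]
  simp

lemma lacunaryField_lacunaryFreq (p : ℤˣ × ℕ) :
    lacunaryField (lacunaryFreq p) = EuclideanSpace.single 1 (lacunaryAmplitude p.2 : ℂ) :=
  lacunaryFreq_injective.extend_apply _ _ p

lemma lacunaryField_of_notMem_range {k : ℤ × ℤ} (hk : k ∉ Set.range lacunaryFreq) :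
    lacunaryField k = 0 :=
  Function.extend_apply' _ _ k hk

lemma sq_norm_lacunaryField_lacunaryFreq (p : ℤˣ × ℕ) :
    ‖lacunaryField (lacunaryFreq p)‖ ^ 2 = (2 ^ p.2 ^ 3)⁻¹ := by
  rw [lacunaryField_lacunaryFreq, PiLp.norm_single, Complex.norm_real, lacunaryAmplitude,
    Real.norm_of_nonneg (Real.sqrt_nonneg _), Real.sq_sqrt (by positivity)]

lemma lacunaryField_inH : InH lacunaryField := by
  refine ⟨lacunaryField_of_notMem_range ?_, fun k i => ?_, fun k => ?_⟩
  · rintro ⟨p, hp⟩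
    have := abs_fst_lacunaryFreq p
    rw [hp] at this
    exact absurd this.symm (by positivity)
  · by_cases hk : k ∈ Set.range lacunaryFreq
    · obtain ⟨p, rfl⟩ := hk
      rw [neg_lacunaryFreq, lacunaryField_lacunaryFreq, lacunaryField_lacunaryFreq]
      fin_cases i <;> simp
    · have hk' : -k ∉ Set.range lacunaryFreq := by
        rintro ⟨p, hp⟩
        exact hk ⟨(-p.1, p.2), by rw [← neg_lacunaryFreq, hp, neg_neg]⟩
      simp [lacunaryField_of_notMem_range hk, lacunaryField_of_notMem_range hk']
  · by_cases hk : k ∈ Set.range lacunaryFreq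
    · obtain ⟨p, rfl⟩ := hk
      rw [lacunaryField_lacunaryFreq]
      simp [lacunaryFreq]
    · simp [lacunaryField_of_notMem_range hk]

lemma summable_two_pow_mul_sq_div_two_pow_cube (a : ℕ) :
    Summable fun m : ℕ => (2 : ℝ) ^ (a * m ^ 2) / 2 ^ m ^ 3 := by
  have hexp (m : ℕ) : a * m ^ 2 + m ≤ a ^ 3 + a + m ^ 3 := by
    rcases le_or_gt m a with h | h
    · have : a * m ^ 2 ≤ a ^ 3 := by nlinarith [Nat.pow_le_pow_left h 2]
      omega
    · have h1 : (a + 1) * m ^ 2 ≤ m ^ 3 := by rw [pow_succ' m 2]; gcongr; omega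
      have h2 : m ≤ m ^ 2 := Nat.le_self_pow two_ne_zero m
      linarith [Nat.zero_le (a ^ 3)]
  refine Summable.of_nonneg_of_le (fun m => by positivity) (fun m => ?_)
    ((summable_geometric_two).mul_left ((2 : ℝ) ^ (a ^ 3 + a)))
  have h := pow_le_pow_right₀ (one_le_two (α := ℝ)) (hexp m)
  rw [pow_add, pow_add] at h
  rw [div_le_iff₀ (by positivity)]
  calc (2 : ℝ) ^ (a * m ^ 2) ≤ 2 ^ (a ^ 3 + a) * 2 ^ m ^ 3 / 2 ^ m :=
        (le_div_iff₀ (by positivity)).2 h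
    _ = 2 ^ (a ^ 3 + a) * (1 / 2) ^ m * 2 ^ m ^ 3 := by rw [one_div_pow]; ring

lemma weighted_sq_norm_lacunaryField_lacunaryFreq (κ₀ : ℝ) (α : ℕ) (p : ℤˣ × ℕ) :
    (κ₀ * knorm (lacunaryFreq p)) ^ (2 * α) * ‖lacunaryField (lacunaryFreq p)‖ ^ 2
      = κ₀ ^ (2 * α) * (2 ^ (2 * α * p.2 ^ 2) / 2 ^ p.2 ^ 3) := by
  rw [knorm_lacunaryFreq, sq_norm_lacunaryField_lacunaryFreq, mul_pow, ← pow_mul]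
  ring

lemma summableA_lacunaryField (κ₀ : ℝ) (α : ℕ) : SummableA κ₀ lacunaryField α := by
  rw [SummableA, ← lacunaryFreq_injective.summable_iff fun k hk => by
    rw [lacunaryField_of_notMem_range hk]; simp]
  simp only [Function.comp_def, weighted_sq_norm_lacunaryField_lacunaryFreq]
  refine Summable.mul_left _ ((summable_prod_of_nonneg fun p => ?_).2 ⟨fun _ => ?_, ?_⟩)
  · positivity
  · exact summable_two_pow_mul_sq_div_two_pow_cube _
  · exact Summable.of_finite

lemma le_sqA_lacunaryField (L κ₀ : ℝ) (α : ℕ) :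
    L ^ 2 * κ₀ ^ (2 * α) * 2 ^ α ^ 3 ≤ sqA L κ₀ lacunaryField α := by
  have hterm := weighted_sq_norm_lacunaryField_lacunaryFreq κ₀ α (1, α)
  rw [show 2 * α * α ^ 2 = α ^ 3 + α ^ 3 by ring, pow_add,
    mul_div_cancel_right₀ _ (by positivity)] at hterm
  rw [mul_assoc, sqA, ← hterm]
  gcongr
  refine (summableA_lacunaryField κ₀ α).le_tsum _ fun k _ => ?_
  have : 0 ≤ (κ₀ * knorm k) ^ (2 * α) := (even_two_mul α).pow_nonneg _
  positivity

lemma exists_mul_exp_mul_sq_lt_two_pow_cube (σ C : ℝ) :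
    ∃ α : ℕ, C * exp (σ * α ^ 2) < 2 ^ α ^ 3 := by
  obtain ⟨α, hα⟩ := exists_nat_ge (max 1 ((σ + |C|) / log 2))
  refine ⟨α, ?_⟩
  have hα1 : (1 : ℝ) ≤ α := le_of_max_le_left hα
  have hαlog : σ + |C| ≤ α * log 2 :=
    (div_le_iff₀ (log_pos one_lt_two)).mp (le_of_max_le_right hα)
  have hexp : |C| + σ * α ^ 2 ≤ α ^ 3 * log 2 := by
    have h1 := mul_le_mul_of_nonneg_left hαlog (sq_nonneg (α : ℝ))
    have h2 : |C| ≤ |C| * α ^ 2 := le_mul_of_one_le_right (abs_nonneg _) (one_le_pow₀ hα1)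
    linarith
  calc C * exp (σ * α ^ 2) < exp |C| * exp (σ * α ^ 2) := by
        gcongr
        linarith [le_abs_self C, add_one_le_exp |C|]
    _ = exp (|C| + σ * α ^ 2) := (exp_add _ _).symm
    _ ≤ exp (α ^ 3 * log 2) := exp_le_exp.mpr hexp
    _ = 2 ^ α ^ 3 := by rw [← exp_log (pow_pos two_pos _), log_pow]; push_cast; rfl

theorem union_C_proper_subset_of_smooth_general (L ν κ₀ : ℝ) (hL : 0 < L)
    (hκ₀ : κ₀ = 2 * Real.pi / L) :
    ∃ u : ℤ × ℤ → Vc, InH u ∧ (∀ α : ℕ, SummableA κ₀ u α) ∧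
      ∀ σ : ℝ, 0 < σ → ∀ c₀ : ℝ, ∃ α : ℕ,
        c₀ * Real.exp (σ * (α : ℝ) ^ 2) * ν ^ 2 * κ₀ ^ (2 * α) < sqA L κ₀ u α := by
  have hκ₀pos : 0 < κ₀ := hκ₀ ▸ by positivity
  refine ⟨lacunaryField, lacunaryField_inH, summableA_lacunaryField κ₀, fun σ _ c₀ => ?_⟩
  obtain ⟨α, hα⟩ := exists_mul_exp_mul_sq_lt_two_pow_cube σ (c₀ * ν ^ 2 / L ^ 2)
  refine ⟨α, lt_of_lt_of_le ?_ (le_sqA_lacunaryField L κ₀ α)⟩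
  calc c₀ * exp (σ * α ^ 2) * ν ^ 2 * κ₀ ^ (2 * α)
      = L ^ 2 * κ₀ ^ (2 * α) * (c₀ * ν ^ 2 / L ^ 2 * exp (σ * α ^ 2)) := by field_simp
    _ < L ^ 2 * κ₀ ^ (2 * α) * 2 ^ α ^ 3 := by gcongr

/-- There exists `u ∈ C^∞([0,L]²) ∩ H` (i.e. `u ∈ H` with all
`|A^{α/2}u|` finite) such that for every `σ > 0` and every `c₀ ∈ ℝ` there is an
`α ∈ ℕ` with `|A^{α/2}u|² > c₀ e^{σα²} ν² κ₀^{2α}`; that is, `∪_{σ>0} C(σ)` is a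
proper subset of `C^∞([0,L]²) ∩ H`. -/
theorem union_C_proper_subset_of_smooth (L ν κ₀ : ℝ) (hL : 0 < L) (hν : 0 < ν)
    (hκ₀ : κ₀ = 2 * Real.pi / L) :
    ∃ u : ℤ × ℤ → Vc, InH u ∧ (∀ α : ℕ, SummableA κ₀ u α) ∧
      ∀ σ : ℝ, 0 < σ → ∀ c₀ : ℝ, ∃ α : ℕ,
        c₀ * Real.exp (σ * (α : ℝ) ^ 2) * ν ^ 2 * κ₀ ^ (2 * α) < sqA L κ₀ u α :=
  union_C_proper_subset_of_smooth_general L ν κ₀ hL hκ₀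
end
end

section
/- Let σ > 0, ε ∈ [0,1], and set b := 1/(2^{4+2ε} σ). Suppose u satisfies |A^{α/2}u|² ≤ c₀ e^{σ α²} ν² κ₀^{2α} for all α ∈ ℕ, for some c₀ > 0, and that |A^{1/2}u| < ∞. Then L² Σ_{k≠0} e^{2b(ln(|k|+e))^{1+ε}} |û(k)|² is finite, and moreover L² Σ_{k≠0} e^{2b(ln(|k|+e))^{1+ε}} |û(k)|² ≤ (4/3) c(ε) |u|² + (c₀ c₁)^{2/3} ν^{4/3} κ₀^{-2/3} |A^{1/2}u|^{2/3}, where c(ε) := e^{2b(ln(e²+e))^{1+ε}} and c₁ := 1/(e² - e). -/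
noncomputable section

open Real

/-!
Split the weight `w = e^{2b(ln(|k|+e))^{1+ε}}` at the level `θ = (4/3) c(ε)` as `w ≤ θ + M`,
`M = (w - θ)⁺`. The part `θ` gives the first term. For the excess, Hölder with exponents `3/2`
and `3` gives `Σ M |û|² ≤ (Σ M^{3/2} |û|² / |k|)^{2/3} (Σ |k|² |û|²)^{1/3}`, and the last sum
is `|A^{1/2}u|² / (L² κ₀²)`. Since `σ · 2b (ln(|k|+e))^{1+ε} ≤ (ln|k|)² / 8` for `|k| ≥ e²`,
every `k` admits an `α ∈ ℕ` (about `(ln|k| - 1/2)/σ`) with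
`M^{3/2} ≤ |k|^{2α+1} e^{-σα²-α-2}`. Summing over `k` first and then over `α`, the bounds
`|A^{α/2}u|² ≤ c₀ e^{σα²} ν² κ₀^{2α}` cancel the factor `e^{-σα²}`, and what is left is
`Σ_α e^{-α-2} = c₁`.
-/
theorem summable_and_tsum_le_of_forall_exists_le {ι κ : Type*} {φ : ι → ℝ} {g : κ → ι → ℝ}
    {B : κ → ℝ} (hφ : ∀ i, 0 ≤ φ i) (hg : ∀ a i, 0 ≤ g a i) (hle : ∀ i, ∃ a, φ i ≤ g a i)
    (hgs : ∀ a, Summable (g a)) (hgB : ∀ a, ∑' i, g a i ≤ B a) (hB : Summable B) :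
    Summable φ ∧ ∑' i, φ i ≤ ∑' a, B a := by
  have hgi : ∀ i, Summable fun a => g a i := fun i =>
    hB.of_nonneg_of_le (fun a => hg a i) fun a =>
      ((hgs a).le_tsum i fun j _ => hg a j).trans (hgB a)
  have hfin : ∀ s : Finset ι, ∑ i ∈ s, φ i ≤ ∑' a, B a := fun s =>
    calc ∑ i ∈ s, φ i ≤ ∑ i ∈ s, ∑' a, g a i := by
          gcongr with i
          obtain ⟨a, ha⟩ := hle i
          exact ha.trans ((hgi i).le_tsum a fun b _ => hg b i)
      _ = ∑' a, ∑ i ∈ s, g a i := (Summable.tsum_finsetSum fun i _ => hgi i).symm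
      _ ≤ ∑' a, B a := Summable.tsum_le_tsum
          (fun a => ((hgs a).sum_le_tsum s fun i _ => hg a i).trans (hgB a))
          (summable_sum fun i _ => hgi i) hB
  have hφs := summable_of_sum_le hφ hfin
  exact ⟨hφs, hφs.tsum_le_of_sum_le hfin⟩

theorem summable_and_tsum_rpow_mul_rpow_le {ι : Type*} {p q : ℝ} (hpq : p.HolderConjugate q)
    {f g : ι → ℝ} (hf : ∀ i, 0 ≤ f i) (hg : ∀ i, 0 ≤ g i) (hfs : Summable f) (hgs : Summable g) :
    (Summable fun i => f i ^ (1 / p) * g i ^ (1 / q)) ∧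
      ∑' i, f i ^ (1 / p) * g i ^ (1 / q) ≤ (∑' i, f i) ^ (1 / p) * (∑' i, g i) ^ (1 / q) := by
  have hp : ∀ i, (f i ^ (1 / p)) ^ p = f i := fun i => by
    rw [← rpow_mul (hf i), one_div_mul_cancel hpq.ne_zero, rpow_one]
  have hq : ∀ i, (g i ^ (1 / q)) ^ q = g i := fun i => by
    rw [← rpow_mul (hg i), one_div_mul_cancel hpq.symm.ne_zero, rpow_one]
  have hfs' : Summable fun i => (f i ^ (1 / p)) ^ p := by simpa only [hp] using hfs
  have hgs' : Summable fun i => (g i ^ (1 / q)) ^ q := by simpa only [hq] using hgs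
  simpa only [hp, hq] using summable_and_inner_le_Lp_mul_Lq_tsum_of_nonneg hpq
    (fun i => rpow_nonneg (hf i) _) (fun i => rpow_nonneg (hg i) _) hfs' hgs'

theorem hasSum_exp_neg_nat_sub_two :
    HasSum (fun n : ℕ => exp (-n - 2)) (1 / (exp 1 ^ 2 - exp 1)) := by
  have hterm : (fun n : ℕ => exp (-n - 2)) = fun n => exp (-2) * exp (-1) ^ n := by
    funext n
    rw [← exp_nat_mul, ← exp_add]
    ring_nf
  have hsum : 1 / (exp 1 ^ 2 - exp 1) = exp (-2) * (1 - exp (-1))⁻¹ := by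
    have he : exp 1 ^ 2 - exp 1 ≠ 0 := by nlinarith [add_one_lt_exp one_ne_zero]
    rw [exp_neg, exp_neg, show exp 2 = exp 1 ^ 2 by rw [← exp_nat_mul]; norm_num]
    field_simp
  rw [hterm, hsum]
  exact (hasSum_geometric_of_lt_one (exp_pos (-1)).le
    (exp_lt_one_iff.mpr (by norm_num))).mul_left (exp (-2))

/-- `2b (ln(r + e))^{1+ε}` with `b = 1/(2^{4+2ε} σ)`; the weight of the theorem is its
exponential. -/
def logGevreyExponent (σ ε r : ℝ) : ℝ :=
  2 * (1 / ((2:ℝ) ^ ((4:ℝ) + 2 * ε) * σ)) * log (r + exp 1) ^ ((1:ℝ) + ε)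

theorem logGevreyExponent_le_of_le {σ ε r s : ℝ} (hσ : 0 < σ) (hε : 0 ≤ ε) (hr : 0 ≤ r)
    (hrs : r ≤ s) : logGevreyExponent σ ε r ≤ logGevreyExponent σ ε s := by
  unfold logGevreyExponent
  have he : 1 ≤ exp 1 := one_le_exp zero_le_one
  gcongr
  exact log_nonneg (by linarith)

theorem logGevreyExponent_nonneg {σ ε r : ℝ} (hσ : 0 < σ) (hr : 0 ≤ r) :
    0 ≤ logGevreyExponent σ ε r := by
  have : 0 ≤ log (r + exp 1) := log_nonneg (by linarith [add_one_le_exp (1:ℝ)])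
  unfold logGevreyExponent
  positivity

theorem log_add_exp_one_le_two_mul_log {r : ℝ} (hr : exp 2 ≤ r) :
    log (r + exp 1) ≤ 2 * log r := by
  have he : exp 1 + 1 ≤ exp 2 := by
    rw [show (2:ℝ) = 1 + 1 by norm_num, exp_add]
    nlinarith [add_one_le_exp (1:ℝ)]
  have hr0 : 0 < r := (exp_pos 2).trans_le hr
  rw [← log_rpow hr0, show (2:ℝ) = ((2:ℕ):ℝ) by norm_num, rpow_natCast]
  exact log_le_log (by positivity)
    (by nlinarith [mul_le_mul_of_nonneg_left (he.trans hr) hr0.le, exp_pos 1])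

theorem mul_logGevreyExponent_le {σ ε r : ℝ} (hσ : 0 < σ) (hε0 : 0 ≤ ε) (hε1 : ε ≤ 1)
    (hr : exp 2 ≤ r) : σ * logGevreyExponent σ ε r ≤ log r ^ 2 / 8 := by
  have ht : 2 ≤ log r := by rw [← log_exp 2]; exact log_le_log (exp_pos 2) hr
  have hX : 0 ≤ log (r + exp 1) := log_nonneg (by linarith [add_one_le_exp (1:ℝ), exp_pos 2])
  have h4 : (4:ℝ) ^ ((1:ℝ) + ε) * 4 = 2 ^ ((4:ℝ) + 2 * ε) := by
    rw [show (4:ℝ) + 2 * ε = 2 * (1 + ε) + 2 by ring, rpow_add two_pos, rpow_mul zero_le_two]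
    norm_num
  have hXp : log (r + exp 1) ^ ((1:ℝ) + ε) ≤ 4 ^ ((1:ℝ) + ε) * (log r / 2) ^ 2 :=
    calc log (r + exp 1) ^ ((1:ℝ) + ε) ≤ (4 * (log r / 2)) ^ ((1:ℝ) + ε) := by
          gcongr
          linarith [log_add_exp_one_le_two_mul_log hr]
      _ = 4 ^ ((1:ℝ) + ε) * (log r / 2) ^ ((1:ℝ) + ε) := mul_rpow (by norm_num) (by linarith)
      _ ≤ 4 ^ ((1:ℝ) + ε) * (log r / 2) ^ ((2:ℕ):ℝ) := by
          gcongr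
          · linarith
          · push_cast; linarith
      _ = 4 ^ ((1:ℝ) + ε) * (log r / 2) ^ 2 := by rw [rpow_natCast]
  unfold logGevreyExponent
  rw [← h4]
  field_simp
  nlinarith

theorem exists_nat_quadratic_le {σ t Z : ℝ} (hσ : 0 < σ) (ht : 2 < t) (hZ : 1 / 2 < Z)
    (hσZ : σ * Z ≤ t ^ 2 / 8) :
    ∃ α : ℕ, 3 / 2 * Z + σ * α ^ 2 + α + 2 ≤ (2 * α + 1) * t := by
  rcases le_or_gt σ (t - 1 / 2) with hσt | hσt
  · -- round the unconstrained maximiser `(t - 1/2)/σ` to the nearest integer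
    set x := (t - 1 / 2) / σ
    have hxσ : x * σ = t - 1 / 2 := div_mul_cancel₀ _ hσ.ne'
    refine ⟨⌊x + 1 / 2⌋₊, ?_⟩
    have hx : 0 < x := div_pos (by linarith) hσ
    have hα_le : (⌊x + 1 / 2⌋₊ : ℝ) ≤ x + 1 / 2 := Nat.floor_le (by linarith)
    have hα_gt : x + 1 / 2 < ⌊x + 1 / 2⌋₊ + 1 := Nat.lt_floor_add_one _
    set α : ℝ := (⌊x + 1 / 2⌋₊ : ℝ)
    have hround : (α * σ - (t - 1 / 2)) ^ 2 ≤ (σ / 2) ^ 2 := by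
      apply sq_le_sq' <;> nlinarith
    refine le_of_mul_le_mul_left ?_ hσ
    nlinarith
  · -- were `α = 0` too small, `σ > t - 1/2` would force `t < 2.61`, hence `Z ≤ t²/(8σ) < 1/2`
    refine ⟨0, ?_⟩
    push_cast
    nlinarith [mul_lt_mul_of_pos_left hσt (by linarith : (0:ℝ) < Z)]

def logGevreyExcess (σ ε r : ℝ) : ℝ :=
  max (exp (logGevreyExponent σ ε r) - 4 / 3 * exp (logGevreyExponent σ ε (exp 1 ^ 2))) 0

theorem logGevreyExcess_nonneg (σ ε r : ℝ) : 0 ≤ logGevreyExcess σ ε r := le_max_right _ _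

theorem exp_logGevreyExponent_le_add_logGevreyExcess (σ ε r : ℝ) :
    exp (logGevreyExponent σ ε r) ≤
      4 / 3 * exp (logGevreyExponent σ ε (exp 1 ^ 2)) + logGevreyExcess σ ε r :=
  sub_le_iff_le_add'.1 (le_max_left _ _)

theorem logGevreyExcess_eq_zero_of_le {σ ε r : ℝ} (hσ : 0 < σ) (hε : 0 ≤ ε) (hr : 0 ≤ r)
    (hre : r ≤ exp 1 ^ 2) : logGevreyExcess σ ε r = 0 := by
  have h := exp_le_exp.2 (logGevreyExponent_le_of_le hσ hε hr hre)
  exact max_eq_right (by linarith [exp_pos (logGevreyExponent σ ε (exp 1 ^ 2))])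

theorem logGevreyExcess_rpow_le_of_le {σ ε r : ℝ} {α : ℕ} (hr : 0 < r)
    (h : 3 / 2 * logGevreyExponent σ ε r + σ * α ^ 2 + α + 2 ≤ (2 * α + 1) * log r) :
    logGevreyExcess σ ε r ^ ((3:ℝ) / 2) ≤ r ^ (2 * α + 1) * exp (-σ * α ^ 2 - α - 2) :=
  calc logGevreyExcess σ ε r ^ ((3:ℝ) / 2) ≤ exp (logGevreyExponent σ ε r) ^ ((3:ℝ) / 2) := by
        gcongr
        · exact logGevreyExcess_nonneg σ ε r
        · exact max_le (by linarith [exp_pos (logGevreyExponent σ ε (exp 1 ^ 2))]) (exp_pos _).le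
    _ = exp (3 / 2 * logGevreyExponent σ ε r) := by rw [← exp_mul, mul_comm]
    _ ≤ exp ((2 * α + 1) * log r + (-σ * α ^ 2 - α - 2)) := exp_le_exp.2 (by linarith)
    _ = r ^ (2 * α + 1) * exp (-σ * α ^ 2 - α - 2) := by
        rw [exp_add, show (2 * (α:ℝ) + 1) = ((2 * α + 1 : ℕ) : ℝ) by push_cast; ring,
          exp_nat_mul, exp_log hr]

theorem exists_nat_logGevreyExcess_rpow_le {σ ε r : ℝ} (hσ : 0 < σ) (hε0 : 0 ≤ ε) (hε1 : ε ≤ 1)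
    (hr : 0 ≤ r) : ∃ α : ℕ,
      logGevreyExcess σ ε r ^ ((3:ℝ) / 2) ≤ r ^ (2 * α + 1) * exp (-σ * α ^ 2 - α - 2) := by
  rcases le_or_gt r (exp 1 ^ 2) with hre | hre
  · refine ⟨0, ?_⟩
    rw [logGevreyExcess_eq_zero_of_le hσ hε0 hr hre, zero_rpow (by norm_num)]
    positivity
  rw [show exp 1 ^ 2 = exp 2 by rw [← exp_nat_mul]; norm_num] at hre
  have hr0 : 0 < r := (exp_pos 2).trans hre
  rcases le_or_gt (logGevreyExcess σ ε r) 1 with hsmall | hlarge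
  · refine ⟨0, ?_⟩
    calc logGevreyExcess σ ε r ^ ((3:ℝ) / 2) ≤ 1 :=
          rpow_le_one (logGevreyExcess_nonneg σ ε r) hsmall (by norm_num)
      _ ≤ r ^ (2 * 0 + 1) * exp (-σ * ((0:ℕ):ℝ) ^ 2 - ((0:ℕ):ℝ) - 2) := by
          rw [show -σ * ((0:ℕ):ℝ) ^ 2 - ((0:ℕ):ℝ) - 2 = -2 by simp, exp_neg, pow_one,
            ← div_eq_mul_inv, one_le_div (exp_pos 2)]
          exact hre.le
  have hE : 1 / 2 < logGevreyExponent σ ε r := by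
    have hθ := one_le_exp (logGevreyExponent_nonneg (ε := ε) hσ (r := exp 1 ^ 2) (by positivity))
    have h2 : 2 < exp (logGevreyExponent σ ε r) := by
      rcases lt_max_iff.1 hlarge with h | h <;> linarith
    linarith [log_two_gt_d9, (log_lt_iff_lt_exp two_pos).2 h2]
  have ht : 2 < log r := by rw [← log_exp 2]; exact log_lt_log (exp_pos 2) hre
  obtain ⟨α, hα⟩ := exists_nat_quadratic_le hσ ht hE (mul_logGevreyExponent_le hσ hε0 hε1 hre.le)
  exact ⟨α, logGevreyExcess_rpow_le_of_le hr0 hα⟩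

theorem mul_eq_rpow_two_thirds_mul_rpow_one_third {M a r : ℝ} (hM : 0 ≤ M) (ha : 0 ≤ a)
    (hr : 0 < r) :
    M * a = (M ^ ((3:ℝ) / 2) * a / r) ^ ((2:ℝ) / 3) * (r ^ 2 * a) ^ ((1:ℝ) / 3) := by
  have hM' : 0 ≤ M ^ ((3:ℝ) / 2) := rpow_nonneg hM _
  rw [div_rpow (by positivity) hr.le, mul_rpow hM' ha, mul_rpow (by positivity) ha,
    ← rpow_mul hM, ← rpow_natCast, ← rpow_mul hr.le]
  have ha' : a ^ ((2:ℝ) / 3) * a ^ ((1:ℝ) / 3) = a := by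
    rw [← rpow_add' ha (by norm_num)]; norm_num
  norm_num
  field_simp
  rw [mul_assoc, ha']

theorem summable_and_tsum_logGevreyExcess_rpow_div_le {ι : Type*} {σ ε C : ℝ} (hσ : 0 < σ)
    (hε0 : 0 ≤ ε) (hε1 : ε ≤ 1) {r a : ι → ℝ} (hr : ∀ i, 0 ≤ r i) (ha : ∀ i, 0 ≤ a i)
    (hmoms : ∀ α : ℕ, Summable fun i => r i ^ (2 * α) * a i)
    (hmom : ∀ α : ℕ, ∑' i, r i ^ (2 * α) * a i ≤ C * exp (σ * α ^ 2)) :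
    (Summable fun i => logGevreyExcess σ ε (r i) ^ ((3:ℝ) / 2) * a i / r i) ∧
      ∑' i, logGevreyExcess σ ε (r i) ^ ((3:ℝ) / 2) * a i / r i ≤
        C * (1 / (exp 1 ^ 2 - exp 1)) := by
  set g : ℕ → ι → ℝ := fun α i => exp (-σ * α ^ 2 - α - 2) * (r i ^ (2 * α) * a i)
  have hg : ∀ α i, 0 ≤ g α i := fun α i => by have := hr i; have := ha i; positivity
  have hle : ∀ i, ∃ α, logGevreyExcess σ ε (r i) ^ ((3:ℝ) / 2) * a i / r i ≤ g α i := by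
    intro i
    rcases (hr i).eq_or_lt with hr0 | hr0
    · exact ⟨0, by rw [← hr0, div_zero]; exact hg 0 i⟩
    obtain ⟨α, hα⟩ := exists_nat_logGevreyExcess_rpow_le hσ hε0 hε1 (hr i)
    refine ⟨α, (div_le_iff₀ hr0).2 ?_⟩
    calc logGevreyExcess σ ε (r i) ^ ((3:ℝ) / 2) * a i
        ≤ r i ^ (2 * α + 1) * exp (-σ * α ^ 2 - α - 2) * a i := by gcongr; exact ha i
      _ = g α i * r i := by simp only [g]; ring
  have hgB : ∀ α : ℕ, ∑' i, g α i ≤ C * exp (-α - 2) := fun α =>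
    calc ∑' i, g α i = exp (-σ * α ^ 2 - α - 2) * ∑' i, r i ^ (2 * α) * a i := tsum_mul_left
      _ ≤ exp (-σ * α ^ 2 - α - 2) * (C * exp (σ * α ^ 2)) := by gcongr; exact hmom α
      _ = C * exp (-α - 2) := by rw [mul_left_comm, ← exp_add]; ring_nf
  have hB := hasSum_exp_neg_nat_sub_two.mul_left C
  rw [← hB.tsum_eq]
  exact summable_and_tsum_le_of_forall_exists_le
    (fun i => div_nonneg (mul_nonneg (rpow_nonneg (logGevreyExcess_nonneg _ _ _) _) (ha i)) (hr i))
    hg hle (fun α => (hmoms α).mul_left _) hgB hB.summable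

theorem summable_and_tsum_exp_logGevreyExponent_mul_le {ι : Type*} {σ ε C : ℝ} (hσ : 0 < σ)
    (hε0 : 0 ≤ ε) (hε1 : ε ≤ 1) {r a : ι → ℝ} (hr : ∀ i, 0 ≤ r i) (ha : ∀ i, 0 ≤ a i)
    (hra : ∀ i, r i = 0 → a i = 0)
    (hmoms : ∀ α : ℕ, Summable fun i => r i ^ (2 * α) * a i)
    (hmom : ∀ α : ℕ, ∑' i, r i ^ (2 * α) * a i ≤ C * exp (σ * α ^ 2)) :
    (Summable fun i => exp (logGevreyExponent σ ε (r i)) * a i) ∧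
      ∑' i, exp (logGevreyExponent σ ε (r i)) * a i ≤
        4 / 3 * exp (logGevreyExponent σ ε (exp 1 ^ 2)) * ∑' i, a i +
          (C * (1 / (exp 1 ^ 2 - exp 1))) ^ ((2:ℝ) / 3) *
            (∑' i, r i ^ 2 * a i) ^ ((1:ℝ) / 3) := by
  set θ := 4 / 3 * exp (logGevreyExponent σ ε (exp 1 ^ 2))
  set φ := fun i => logGevreyExcess σ ε (r i) ^ ((3:ℝ) / 2) * a i / r i
  set ψ := fun i => r i ^ 2 * a i
  have hφ0 : ∀ i, 0 ≤ φ i := fun i =>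
    div_nonneg (mul_nonneg (rpow_nonneg (logGevreyExcess_nonneg _ _ _) _) (ha i)) (hr i)
  have hψ0 : ∀ i, 0 ≤ ψ i := fun i => mul_nonneg (sq_nonneg _) (ha i)
  obtain ⟨hφs, hφ⟩ := summable_and_tsum_logGevreyExcess_rpow_div_le hσ hε0 hε1 hr ha hmoms hmom
  have hψs : Summable ψ := by simpa using hmoms 1
  obtain ⟨hHs, hH⟩ := summable_and_tsum_rpow_mul_rpow_le (p := 3 / 2) (q := 3)
    ⟨by norm_num, by norm_num, by norm_num⟩ hφ0 hψ0 hφs hψs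
  rw [show (1:ℝ) / (3 / 2) = 2 / 3 by norm_num] at hHs hH
  have hpt : ∀ i, exp (logGevreyExponent σ ε (r i)) * a i ≤
      θ * a i + φ i ^ ((2:ℝ) / 3) * ψ i ^ ((1:ℝ) / 3) := by
    intro i
    have hsplit := mul_le_mul_of_nonneg_right
      (exp_logGevreyExponent_le_add_logGevreyExcess σ ε (r i)) (ha i)
    rcases (hr i).eq_or_lt with hr0 | hr0
    · simp only [hra i hr0.symm, mul_zero, zero_add]
      exact mul_nonneg (rpow_nonneg (hφ0 i) _) (rpow_nonneg (hψ0 i) _)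
    rwa [add_mul, mul_eq_rpow_two_thirds_mul_rpow_one_third
      (logGevreyExcess_nonneg _ _ _) (ha i) hr0] at hsplit
  have hsum0 : Summable a := by simpa using hmoms 0
  have hbound : Summable fun i => θ * a i + φ i ^ ((2:ℝ) / 3) * ψ i ^ ((1:ℝ) / 3) :=
    (hsum0.mul_left θ).add hHs
  have hWs := hbound.of_nonneg_of_le (fun i => mul_nonneg (exp_pos _).le (ha i)) hpt
  refine ⟨hWs, ?_⟩
  calc ∑' i, exp (logGevreyExponent σ ε (r i)) * a i
      ≤ ∑' i, (θ * a i + φ i ^ ((2:ℝ) / 3) * ψ i ^ ((1:ℝ) / 3)) := hWs.tsum_le_tsum hpt hbound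
    _ = θ * ∑' i, a i + ∑' i, φ i ^ ((2:ℝ) / 3) * ψ i ^ ((1:ℝ) / 3) := by
        rw [(hsum0.mul_left θ).tsum_add hHs, tsum_mul_left]
    _ ≤ θ * ∑' i, a i +
          (C * (1 / (exp 1 ^ 2 - exp 1))) ^ ((2:ℝ) / 3) * (∑' i, ψ i) ^ ((1:ℝ) / 3) := by
        gcongr
        exact hH.trans (mul_le_mul_of_nonneg_right
          (rpow_le_rpow (tsum_nonneg hφ0) hφ (by norm_num)) (rpow_nonneg (tsum_nonneg hψ0) _))

theorem eq_zero_of_knorm_eq_zero {k : ℤ × ℤ} (hk : knorm k = 0) : k = 0 := by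
  rw [knorm, sqrt_eq_zero'] at hk
  have h1 : (k.1 : ℝ) = 0 := by nlinarith [sq_nonneg (k.1 : ℝ), sq_nonneg (k.2 : ℝ)]
  have h2 : (k.2 : ℝ) = 0 := by nlinarith [sq_nonneg (k.1 : ℝ), sq_nonneg (k.2 : ℝ)]
  exact Prod.ext (by exact_mod_cast h1) (by exact_mod_cast h2)

theorem sqA_eq_mul_tsum (L κ₀ : ℝ) (u : ℤ × ℤ → Vc) (α : ℕ) :
    sqA L κ₀ u α = κ₀ ^ (2 * α) * ∑' k, knorm k ^ (2 * α) * (L ^ 2 * ‖u k‖ ^ 2) := by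
  rw [sqA, ← tsum_mul_left, ← tsum_mul_left]
  congr 1 with k
  ring

theorem tsum_knorm_pow_mul_le_of_sqA_le {L κ₀ c : ℝ} {u : ℤ × ℤ → Vc} {α : ℕ} (hκ₀ : 0 < κ₀)
    (h : sqA L κ₀ u α ≤ c * κ₀ ^ (2 * α)) :
    ∑' k, knorm k ^ (2 * α) * (L ^ 2 * ‖u k‖ ^ 2) ≤ c := by
  rw [sqA_eq_mul_tsum, mul_comm c] at h
  exact le_of_mul_le_mul_left h (pow_pos hκ₀ _)

theorem SummableA.summable_knorm_pow_mul {κ₀ : ℝ} {u : ℤ × ℤ → Vc} {α : ℕ} (hκ₀ : κ₀ ≠ 0)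
    (h : SummableA κ₀ u α) (c : ℝ) : Summable fun k => knorm k ^ (2 * α) * (c * ‖u k‖ ^ 2) := by
  refine (h.mul_left (c / κ₀ ^ (2 * α))).congr fun k => ?_
  field_simp
  ring

theorem mul_sq_rpow_mul_div_sq_rpow {c ν κ S : ℝ} (hc : 0 ≤ c) (hν : 0 ≤ ν) (hκ : 0 < κ)
    (hS : 0 ≤ S) : (c * ν ^ 2) ^ ((2:ℝ) / 3) * (S / κ ^ 2) ^ ((1:ℝ) / 3) =
      c ^ ((2:ℝ) / 3) * ν ^ ((4:ℝ) / 3) * κ ^ (-(2:ℝ) / 3) * √S ^ ((2:ℝ) / 3) := by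
  rw [mul_rpow hc (sq_nonneg ν), div_rpow hS (sq_nonneg κ), sqrt_eq_rpow, ← rpow_mul hS,
    ← rpow_natCast ν 2, ← rpow_mul hν, ← rpow_natCast κ 2, ← rpow_mul hκ.le,
    show -(2:ℝ) / 3 = -((2:ℕ) * (1 / 3)) by norm_num, rpow_neg hκ.le]
  norm_num
  ring

/-- If `u ∈ C(σ)` with constant `c₀ > 0`, `ε ∈ [0,1]` and
`b := 1/(2^{4+2ε} σ)`, then `L² Σ_{k≠0} e^{2b(ln(|k|+e))^{1+ε}} |û(k)|²` is finite and
`L² Σ_{k≠0} e^{2b(ln(|k|+e))^{1+ε}} |û(k)|² ≤ (4/3) c(ε) |u|²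
  + (c₀ c₁)^{2/3} ν^{4/3} κ₀^{-2/3} |A^{1/2}u|^{2/3}`,
where `c(ε) := e^{2b(ln(e²+e))^{1+ε}}` and `c₁ := 1/(e²-e)`. -/
theorem class_C_to_log_gevrey (L ν κ₀ : ℝ) (hL : 0 < L) (hν : 0 < ν)
    (hκ₀ : κ₀ = 2 * Real.pi / L) (σ ε c₀ : ℝ) (hσ : 0 < σ) (hε0 : 0 ≤ ε) (hε1 : ε ≤ 1)
    (hc₀ : 0 < c₀) (u : ℤ × ℤ → Vc) (hu : InH u)
    (husum : ∀ α : ℕ, SummableA κ₀ u α)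
    (hubd : ∀ α : ℕ, sqA L κ₀ u α ≤ c₀ * Real.exp (σ * (α : ℝ) ^ 2) * ν ^ 2 * κ₀ ^ (2 * α)) :
    Summable (fun k : ℤ × ℤ =>
      Real.exp (2 * (1 / ((2:ℝ) ^ ((4:ℝ) + 2 * ε) * σ)) *
        (Real.log (knorm k + Real.exp 1)) ^ ((1:ℝ) + ε)) * ‖u k‖ ^ 2) ∧
    L ^ 2 * ∑' k : ℤ × ℤ,
        Real.exp (2 * (1 / ((2:ℝ) ^ ((4:ℝ) + 2 * ε) * σ)) *
          (Real.log (knorm k + Real.exp 1)) ^ ((1:ℝ) + ε)) * ‖u k‖ ^ 2 ≤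
      4 / 3 * Real.exp (2 * (1 / ((2:ℝ) ^ ((4:ℝ) + 2 * ε) * σ)) *
          (Real.log (Real.exp 1 ^ 2 + Real.exp 1)) ^ ((1:ℝ) + ε)) * sqA L κ₀ u 0 +
        (c₀ * (1 / (Real.exp 1 ^ 2 - Real.exp 1))) ^ ((2:ℝ) / 3) * ν ^ ((4:ℝ) / 3) *
          κ₀ ^ (-(2:ℝ) / 3) * Real.sqrt (sqA L κ₀ u 1) ^ ((2:ℝ) / 3) := by
  have hκ : 0 < κ₀ := by rw [hκ₀]; positivity
  obtain ⟨hs, hle⟩ := summable_and_tsum_exp_logGevreyExponent_mul_le hσ hε0 hε1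
    (r := knorm) (a := fun k => L ^ 2 * ‖u k‖ ^ 2) (C := c₀ * ν ^ 2)
    (fun k => sqrt_nonneg _) (fun k => by positivity)
    (fun k hk => by simp [eq_zero_of_knorm_eq_zero hk, hu.1])
    (fun α => (husum α).summable_knorm_pow_mul hκ.ne' _)
    (fun α => tsum_knorm_pow_mul_le_of_sqA_le hκ ((hubd α).trans_eq (by ring)))
  have h0 := sqA_eq_mul_tsum L κ₀ u 0
  have h1 := sqA_eq_mul_tsum L κ₀ u 1
  simp only [mul_zero, pow_zero, one_mul, mul_one] at h0 h1
  refine ⟨(summable_mul_left_iff (a := L ^ 2) (by positivity)).1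
    (hs.congr fun k => mul_left_comm _ _ _), ?_⟩
  have hS1 : ∑' k, knorm k ^ 2 * (L ^ 2 * ‖u k‖ ^ 2) = sqA L κ₀ u 1 / κ₀ ^ 2 := by
    rw [h1, mul_div_cancel_left₀ _ (by positivity)]
  rw [← tsum_mul_left]
  calc _ = ∑' k, exp (logGevreyExponent σ ε (knorm k)) * (L ^ 2 * ‖u k‖ ^ 2) :=
        tsum_congr fun k => mul_left_comm _ _ _
    _ ≤ _ := hle
    _ = _ := by
      rw [← h0, hS1, show c₀ * ν ^ 2 * (1 / (exp 1 ^ 2 - exp 1)) =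
          c₀ * (1 / (exp 1 ^ 2 - exp 1)) * ν ^ 2 by ring,
        mul_sq_rpow_mul_div_sq_rpow (mul_nonneg hc₀.le (one_div_nonneg.2 (sub_nonneg.2
          (le_self_pow₀ (one_le_exp zero_le_one) two_ne_zero)))) hν.le hκ
          (by rw [h1]; exact mul_nonneg (sq_nonneg _) (tsum_nonneg fun k => by positivity))]
      rfl
end
end

section
/- If σ > 0 and u belongs to the class C(σ), then u belongs to E_b with b := 1/(64σ), i.e. |u|_b = (L² Σ_{k≠0} e^{2b(ln(|k|+e))²} |û(k)|²)^{1/2} < ∞. -/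
noncomputable section

/-! Testing the moment bounds `|k|^{2α} |û(k)|² ≤ C e^{σα²}` at `α ≈ log(|k| + e) / (4σ)` gives
`|û(k)|² ≲ e^{-7 (log(|k| + e))² / (16σ)}`. This beats the weight `e^{(log(|k| + e))² / (32σ)}`
with room to spare for a factor `(|k| + e)⁻⁴`, which is summable over `ℤ²`. -/

open Real Filter

lemma log_add_exp_one_le {r : ℝ} (hr : 1 ≤ r) : log (r + exp 1) ≤ log r + 2 := by
  have he : exp 1 + 1 ≤ exp 2 := by
    rw [show (2 : ℝ) = 1 + 1 by norm_num, exp_add]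
    nlinarith [add_one_le_exp (1 : ℝ)]
  calc log (r + exp 1) ≤ log (r * exp 2) :=
        log_le_log (by positivity) (by nlinarith [exp_pos 1])
    _ = log r + 2 := by rw [log_mul (by positivity) (exp_pos 2).ne', log_exp]

lemma log_gaussian_exponent_le {σ t a ℓ : ℝ} (hσ : 0 < σ) (ht : 0 ≤ t) (hlo : t ≤ 4 * σ * a)
    (hhi : 4 * σ * a ≤ t + 4 * σ) (hℓ : t - 2 ≤ ℓ) :
    2 * (1 / (64 * σ)) * t ^ 2 + σ * a ^ 2 - 2 * a * ℓ
      ≤ -(4 * t) + (8 * (1 + 4 * σ) ^ 2 / (13 * σ) + σ + 4) := by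
  have hℓa : a * (t - 2) ≤ a * ℓ := mul_le_mul_of_nonneg_left hℓ (by nlinarith)
  obtain ⟨s, hs0, hs4, rfl⟩ : ∃ s, 0 ≤ s ∧ s ≤ 4 * σ ∧ a = (t + s) / (4 * σ) :=
    ⟨4 * σ * a - t, by linarith, by linarith, by field_simp; ring⟩
  have hQ : 0 ≤ (13 * t - 16 * (1 + 4 * σ)) ^ 2 + 156 * t * s
      + 26 * (4 * σ - s) * (4 * σ + s) + 416 * (4 * σ - s) := by
    have : 0 ≤ 4 * σ - s := by linarith
    positivity
  have hdiff : -(4 * t) + (8 * (1 + 4 * σ) ^ 2 / (13 * σ) + σ + 4)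
      - (2 * (1 / (64 * σ)) * t ^ 2 + σ * ((t + s) / (4 * σ)) ^ 2
        - 2 * ((t + s) / (4 * σ)) * (t - 2))
      = ((13 * t - 16 * (1 + 4 * σ)) ^ 2 + 156 * t * s
      + 26 * (4 * σ - s) * (4 * σ + s) + 416 * (4 * σ - s)) / (416 * σ) := by
    field_simp
    ring
  have := div_nonneg hQ (by positivity : (0 : ℝ) ≤ 416 * σ)
  linarith

lemma exp_log_sq_mul_le_of_moment_bound {σ C r x : ℝ} (hσ : 0 < σ) (hr : 1 ≤ r) (hx : 0 ≤ x)
    (h : ∀ α : ℕ, r ^ (2 * α) * x ≤ C * exp (σ * α ^ 2)) :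
    exp (2 * (1 / (64 * σ)) * log (r + exp 1) ^ 2) * x
      ≤ C * exp (8 * (1 + 4 * σ) ^ 2 / (13 * σ) + σ + 4) * ((r + exp 1) ^ 4)⁻¹ := by
  set t := log (r + exp 1) with ht_def
  have hr0 : 0 < r := by linarith
  have ht : 0 ≤ t := log_nonneg (by linarith [add_one_le_exp (1 : ℝ)])
  have hC : 0 ≤ C := by simpa using hx.trans (by simpa using h 0)
  obtain ⟨α, hlo, hhi⟩ : ∃ α : ℕ, t ≤ 4 * σ * α ∧ 4 * σ * α ≤ t + 4 * σ := by
    refine ⟨⌈t / (4 * σ)⌉₊, ?_, ?_⟩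
    · rw [← div_le_iff₀' (by positivity)]; exact Nat.le_ceil _
    · have := mul_le_mul_of_nonneg_left (Nat.ceil_lt_add_one
        (div_nonneg ht (by positivity : (0 : ℝ) ≤ 4 * σ))).le (by positivity : (0 : ℝ) ≤ 4 * σ)
      rwa [mul_add, mul_div_cancel₀ _ (by positivity), mul_one] at this
  have hpow : r ^ (2 * α) = exp (2 * α * log r) := by
    conv_lhs => rw [← exp_log hr0, ← exp_nat_mul]
    push_cast; ring_nf
  have hx' : x ≤ C * exp (σ * α ^ 2 - 2 * α * log r) := by
    rw [exp_sub, ← hpow, mul_div_assoc', le_div_iff₀ (by positivity), mul_comm]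
    exact h α
  have hexp : exp (-(4 * t)) = ((r + exp 1) ^ 4)⁻¹ := by
    rw [exp_neg, mul_comm, exp_mul, ht_def, exp_log (by positivity)]; norm_cast
  calc exp (2 * (1 / (64 * σ)) * t ^ 2) * x
      ≤ exp (2 * (1 / (64 * σ)) * t ^ 2) * (C * exp (σ * α ^ 2 - 2 * α * log r)) := by gcongr
    _ = C * exp (2 * (1 / (64 * σ)) * t ^ 2 + σ * α ^ 2 - 2 * α * log r) := by
      rw [add_sub_assoc, exp_add]; ring
    _ ≤ C * exp (-(4 * t) + (8 * (1 + 4 * σ) ^ 2 / (13 * σ) + σ + 4)) := by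
      gcongr
      exact log_gaussian_exponent_le hσ ht hlo hhi (by linarith [log_add_exp_one_le hr])
    _ = _ := by rw [exp_add, hexp]; ring

lemma summable_inv_one_add_sq : Summable fun n : ℤ => (1 + (n : ℝ) ^ 2)⁻¹ := by
  refine (summable_one_div_int_pow.mpr one_lt_two).of_norm_bounded_eventually ?_
  filter_upwards [eventually_cofinite_ne 0] with n hn
  rw [norm_inv, Real.norm_of_nonneg (by positivity), one_div]
  have : (n : ℝ) ≠ 0 := by exact_mod_cast hn
  gcongr
  linarith

lemma knorm_nonneg (k : ℤ × ℤ) : 0 ≤ knorm k := Real.sqrt_nonneg _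

lemma one_le_knorm {k : ℤ × ℤ} (hk : k ≠ 0) : 1 ≤ knorm k := by
  have one_le_sq {n : ℤ} (hn : n ≠ 0) : (1 : ℝ) ≤ (n : ℝ) ^ 2 :=
    mod_cast (one_le_sq_iff_one_le_abs _).mpr (Int.one_le_abs hn)
  rw [knorm, Real.one_le_sqrt]
  by_cases h : k.1 = 0
  · nlinarith [one_le_sq fun h' => hk (Prod.ext h h'), sq_nonneg (k.1 : ℝ)]
  · nlinarith [one_le_sq h, sq_nonneg (k.2 : ℝ)]

lemma summable_inv_knorm_add_exp_one_pow_four :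
    Summable fun k : ℤ × ℤ => ((knorm k + exp 1) ^ 4)⁻¹ := by
  refine (summable_inv_one_add_sq.mul_of_nonneg summable_inv_one_add_sq
    (fun _ => by positivity) (fun _ => by positivity)).of_nonneg_of_le
    (fun _ => by positivity) fun k => ?_
  rw [← mul_inv]
  have hk : knorm k ^ 2 = (k.1 : ℝ) ^ 2 + (k.2 : ℝ) ^ 2 := Real.sq_sqrt (by positivity)
  have := knorm_nonneg k
  have he : 1 ≤ exp 1 := by linarith [add_one_le_exp (1 : ℝ)]
  gcongr
  calc (1 + (k.1 : ℝ) ^ 2) * (1 + (k.2 : ℝ) ^ 2) ≤ (1 + knorm k ^ 2) ^ 2 := by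
        rw [hk]; nlinarith [sq_nonneg ((k.1 : ℝ) * k.2)]
    _ ≤ ((knorm k + exp 1) ^ 2) ^ 2 := by gcongr; nlinarith
    _ = (knorm k + exp 1) ^ 4 := by ring

lemma InC.knorm_pow_mul_le {L κ₀ ν σ : ℝ} {u : ℤ × ℤ → Vc} (hu : InC L κ₀ ν σ u) (hL : L ≠ 0)
    (hκ₀ : 0 < κ₀) : ∃ C, ∀ k (α : ℕ), knorm k ^ (2 * α) * ‖u k‖ ^ 2 ≤ C * exp (σ * α ^ 2) := by
  obtain ⟨hsum, c₀, hc⟩ := hu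
  refine ⟨c₀ * ν ^ 2 / L ^ 2, fun k α => ?_⟩
  have hterm : L ^ 2 * ((κ₀ * knorm k) ^ (2 * α) * ‖u k‖ ^ 2) ≤ sqA L κ₀ u α := by
    unfold sqA
    gcongr
    exact (hsum α).le_tsum k fun j _ => by have := knorm_nonneg j; positivity
  have hpos : 0 < L ^ 2 * κ₀ ^ (2 * α) := by positivity
  rw [← mul_le_mul_iff_of_pos_left hpos]
  calc L ^ 2 * κ₀ ^ (2 * α) * (knorm k ^ (2 * α) * ‖u k‖ ^ 2)
      = L ^ 2 * ((κ₀ * knorm k) ^ (2 * α) * ‖u k‖ ^ 2) := by ring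
    _ ≤ c₀ * exp (σ * α ^ 2) * ν ^ 2 * κ₀ ^ (2 * α) := hterm.trans (hc α)
    _ = _ := by field_simp

theorem class_C_subset_Eb_general (L ν κ₀ : ℝ) (hL : 0 < L)
    (hκ₀ : κ₀ = 2 * Real.pi / L) (σ : ℝ) (hσ : 0 < σ)
    (u : ℤ × ℤ → Vc) (huC : InC L κ₀ ν σ u) :
    Summable (ebTerm (1 / (64 * σ)) u) := by
  obtain ⟨C, hC⟩ := huC.knorm_pow_mul_le hL.ne' (by rw [hκ₀]; positivity)
  refine (summable_inv_knorm_add_exp_one_pow_four.mul_left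
    (C * exp (8 * (1 + 4 * σ) ^ 2 / (13 * σ) + σ + 4))).of_norm_bounded_eventually ?_
  filter_upwards [eventually_cofinite_ne 0] with k hk
  rw [Real.norm_of_nonneg (by unfold ebTerm; positivity)]
  exact exp_log_sq_mul_le_of_moment_bound hσ (one_le_knorm hk) (by positivity) (hC k)

/-- If `σ > 0` and `u ∈ C(σ)`, then `u ∈ E_b` with `b := 1/(64σ)`,
i.e. `|u|_b = (L² Σ_{k≠0} e^{2b(ln(|k|+e))²} |û(k)|²)^{1/2} < ∞`. -/
theorem class_C_subset_Eb (L ν κ₀ : ℝ) (hL : 0 < L) (hν : 0 < ν)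
    (hκ₀ : κ₀ = 2 * Real.pi / L) (σ : ℝ) (hσ : 0 < σ)
    (u : ℤ × ℤ → Vc) (hu : InH u) (huC : InC L κ₀ ν σ u) :
    Summable (ebTerm (1 / (64 * σ)) u) :=
  class_C_subset_Eb_general L ν κ₀ hL hκ₀ σ hσ u huC
end
end

section
/- For every b > 0 and n ∈ ℕ, the set E_{b,n} = {u ∈ E_b : |u|_b ≤ n} is nowhere dense in the metric space (F, d), i.e. its closure has empty interior. -/
/-!
Because `e^{2b (ln(|k| + e))²}` dominates every power of `|k|`, an element of `E_{b,n}` satisfies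
`|A^{α/2} u| ≤ κ₀^α e^{α²/(4b)} n` for every `α`, and points of its closure satisfy the same
bounds up to `+ 1`, since `d`-closeness controls each fixed seminorm `|A^{α/2} ·|`. A set bounded
in every seminorm has empty interior: adding to any `u` a shear flow of high frequency `N` and
small amplitude moves `u` by less than `r` in `d` while making `|A^{(A+1)/2} u|` arbitrarily large.
-/

noncomputable section

/-- The Fourier model of `F = C^∞ ∩ H`: elements of `H` with `|A^{α/2}u| < ∞`
for every `α ∈ ℕ`. -/
def Fs (L κ₀ : ℝ) : Type := {u : ℤ × ℤ → Vc // InH u ∧ ∀ α : ℕ, SummableA κ₀ u α}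

/-- `|A^{α/2} w| = (L² Σ_{k≠0} (κ₀|k|)^{2α} |ŵ(k)|²)^{1/2}`. -/
def nA (L κ₀ : ℝ) (w : ℤ × ℤ → Vc) (α : ℕ) : ℝ := Real.sqrt (sqA L κ₀ w α)

/-- The Fréchet metric
`d(u,v) = Σ_{α=1}^∞ 2^{-α} |A^{α/2}(u-v)| / (1 + |A^{α/2}(u-v)|)`. -/
def dF (L κ₀ : ℝ) (u v : Fs L κ₀) : ℝ :=
  ∑' α : ℕ, (1 / 2 ^ (α + 1)) *
    (nA L κ₀ (fun k => u.1 k - v.1 k) (α + 1) /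
      (1 + nA L κ₀ (fun k => u.1 k - v.1 k) (α + 1)))

/-- The topology on `(F, d)` generated by the open balls of the metric `d`. -/
noncomputable instance topF (L κ₀ : ℝ) : TopologicalSpace (Fs L κ₀) :=
  TopologicalSpace.generateFrom
    {B | ∃ x : Fs L κ₀, ∃ r : ℝ, B = {y : Fs L κ₀ | dF L κ₀ x y < r}}

/-- The set `E_{b,n} = {u ∈ E_b : |u|_b ≤ n}`, viewed as a subset of `F`. -/
def EbnSet (L κ₀ b : ℝ) (n : ℕ) : Set (Fs L κ₀) :=
  {u : Fs L κ₀ | Summable (ebTerm b u.1) ∧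
    Real.sqrt (L ^ 2 * ∑' k : ℤ × ℤ, ebTerm b u.1 k) ≤ n}

section SquareSummable

variable {ι E : Type*} [NormedAddCommGroup E]

theorem memℓp_two_iff_summable_sq {f : ι → E} :
    Memℓp f 2 ↔ Summable fun i => ‖f i‖ ^ 2 := by
  rw [memℓp_gen_iff (by norm_num)]
  simp only [ENNReal.toReal_ofNat, Real.rpow_two]

theorem lp_two_norm_eq_sqrt_tsum (f : lp (fun _ : ι => E) 2) :
    ‖f‖ = √(∑' i, ‖f i‖ ^ 2) := by
  rw [lp.norm_eq_tsum_rpow (by norm_num), Real.sqrt_eq_rpow]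
  simp only [ENNReal.toReal_ofNat, Real.rpow_two, one_div]

theorem summable_norm_add_sq {f g : ι → E} (hf : Summable fun i => ‖f i‖ ^ 2)
    (hg : Summable fun i => ‖g i‖ ^ 2) : Summable fun i => ‖f i + g i‖ ^ 2 :=
  memℓp_two_iff_summable_sq.1
    ((memℓp_two_iff_summable_sq.2 hf).add (memℓp_two_iff_summable_sq.2 hg))

theorem sqrt_tsum_norm_add_sq_le {f g : ι → E} (hf : Summable fun i => ‖f i‖ ^ 2)
    (hg : Summable fun i => ‖g i‖ ^ 2) :
    √(∑' i, ‖f i + g i‖ ^ 2) ≤ √(∑' i, ‖f i‖ ^ 2) + √(∑' i, ‖g i‖ ^ 2) := by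
  let F : lp (fun _ : ι => E) 2 := ⟨f, memℓp_two_iff_summable_sq.2 hf⟩
  let G : lp (fun _ : ι => E) 2 := ⟨g, memℓp_two_iff_summable_sq.2 hg⟩
  simpa only [lp_two_norm_eq_sqrt_tsum, lp.coeFn_add, Pi.add_apply] using norm_add_le F G

end SquareSummable

section Weighted

variable {L κ₀ : ℝ} {α : ℕ} {u v : ℤ × ℤ → Vc}

def weighted (κ₀ : ℝ) (α : ℕ) (u : ℤ × ℤ → Vc) (k : ℤ × ℤ) : Vc := (κ₀ * knorm k) ^ α • u k

theorem norm_weighted_sq (k : ℤ × ℤ) :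
    ‖weighted κ₀ α u k‖ ^ 2 = (κ₀ * knorm k) ^ (2 * α) * ‖u k‖ ^ 2 := by
  rw [weighted, norm_smul, mul_pow, Real.norm_eq_abs, sq_abs, ← pow_mul, mul_comm α]

theorem summableA_iff : SummableA κ₀ u α ↔ Summable fun k => ‖weighted κ₀ α u k‖ ^ 2 := by
  simp only [SummableA, norm_weighted_sq]

theorem nA_eq_sqrt_tsum : nA L κ₀ u α = |L| * √(∑' k, ‖weighted κ₀ α u k‖ ^ 2) := by
  simp only [nA, sqA, norm_weighted_sq, Real.sqrt_mul (sq_nonneg L), Real.sqrt_sq_eq_abs]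

theorem weighted_add : weighted κ₀ α (u + v) = weighted κ₀ α u + weighted κ₀ α v :=
  funext fun _ => smul_add _ _ _

theorem SummableA.add (hu : SummableA κ₀ u α) (hv : SummableA κ₀ v α) :
    SummableA κ₀ (u + v) α := by
  rw [summableA_iff, weighted_add] at *
  exact summable_norm_add_sq hu hv

theorem SummableA.neg (hu : SummableA κ₀ u α) : SummableA κ₀ (-u) α := by
  simpa only [SummableA, Pi.neg_apply, norm_neg] using hu

theorem SummableA.sub (hu : SummableA κ₀ u α) (hv : SummableA κ₀ v α) :
    SummableA κ₀ (u - v) α := by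
  simpa only [sub_eq_add_neg] using hu.add hv.neg

theorem nA_nonneg : 0 ≤ nA L κ₀ u α := Real.sqrt_nonneg _

theorem nA_neg : nA L κ₀ (-u) α = nA L κ₀ u α := by
  simp only [nA, sqA, Pi.neg_apply, norm_neg]

theorem nA_add_le (hu : SummableA κ₀ u α) (hv : SummableA κ₀ v α) :
    nA L κ₀ (u + v) α ≤ nA L κ₀ u α + nA L κ₀ v α := by
  rw [summableA_iff] at hu hv
  simp only [nA_eq_sqrt_tsum, weighted_add, Pi.add_apply, ← mul_add]
  exact mul_le_mul_of_nonneg_left (sqrt_tsum_norm_add_sq_le hu hv) (abs_nonneg L)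

end Weighted

theorem div_one_add_nonneg {t : ℝ} (ht : 0 ≤ t) : 0 ≤ t / (1 + t) :=
  div_nonneg ht (by linarith)

theorem div_one_add_le_one {t : ℝ} (ht : 0 ≤ t) : t / (1 + t) ≤ 1 :=
  (div_le_one (by linarith)).2 (by linarith)

theorem div_one_add_le_div_one_add {s t : ℝ} (hs : 0 ≤ s) (hst : s ≤ t) :
    s / (1 + s) ≤ t / (1 + t) := by
  rw [div_le_div_iff₀ (by linarith) (by linarith)]
  nlinarith

theorem div_one_add_subadditive {a b c : ℝ} (ha : 0 ≤ a) (hb : 0 ≤ b) (hc : 0 ≤ c)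
    (h : a ≤ b + c) : a / (1 + a) ≤ b / (1 + b) + c / (1 + c) :=
  calc a / (1 + a) ≤ (b + c) / (1 + (b + c)) := div_one_add_le_div_one_add ha h
    _ = b / (1 + (b + c)) + c / (1 + (b + c)) := add_div _ _ _
    _ ≤ b / (1 + b) + c / (1 + c) := by gcongr <;> linarith

theorem one_div_two_pow_succ (β : ℕ) : (1 / 2 ^ (β + 1) : ℝ) = 2⁻¹ * 2⁻¹ ^ β := by
  rw [pow_succ, one_div, mul_inv, inv_pow, mul_comm]

theorem summable_geometric_inv_two : Summable fun β : ℕ => (2⁻¹ : ℝ) ^ β := by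
  simpa only [one_div] using summable_geometric_two

theorem summable_one_div_two_pow_succ : Summable fun β : ℕ => (1 / 2 ^ (β + 1) : ℝ) := by
  simpa only [one_div_two_pow_succ] using summable_geometric_inv_two.mul_left 2⁻¹

theorem tsum_one_div_two_pow_succ_mul_le {f : ℕ → ℝ} {A : ℕ} {c : ℝ} (hc : 0 ≤ c)
    (hf₀ : ∀ β, 0 ≤ f β) (hf₁ : ∀ β, f β ≤ 1) (hfc : ∀ β < A, f β ≤ c) :
    ∑' β, 1 / 2 ^ (β + 1) * f β ≤ c + 2⁻¹ ^ A := by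
  have hind : Summable fun β : ℕ => ite (A ≤ β) ((2 : ℝ)⁻¹ ^ β) 0 :=
    summable_geometric_inv_two.of_nonneg_of_le (fun β => by split_ifs <;> positivity)
      fun β => by split_ifs <;> simp
  have hgeo := (summable_geometric_inv_two.mul_left 2⁻¹).mul_left c
  have key : ∀ β, 1 / 2 ^ (β + 1) * f β ≤
      c * (2⁻¹ * 2⁻¹ ^ β) + 2⁻¹ * ite (A ≤ β) (2⁻¹ ^ β) 0 := by
    intro β
    rw [one_div_two_pow_succ]
    split_ifs with hβ
    · exact le_add_of_nonneg_of_le (by positivity)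
        (mul_le_of_le_one_right (by positivity) (hf₁ β))
    · rw [mul_zero, add_zero, mul_comm c]
      exact mul_le_mul_of_nonneg_left (hfc β (not_le.1 hβ)) (by positivity)
  calc ∑' β, 1 / 2 ^ (β + 1) * f β
      ≤ ∑' β, (c * (2⁻¹ * 2⁻¹ ^ β) + 2⁻¹ * ite (A ≤ β) (2⁻¹ ^ β) 0) :=
        Summable.tsum_le_tsum key
          (summable_one_div_two_pow_succ.of_nonneg_of_le
            (fun β => mul_nonneg (by positivity) (hf₀ β))
            fun β => mul_le_of_le_one_right (by positivity) (hf₁ β))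
          (hgeo.add (hind.mul_left _))
    _ = c + 2⁻¹ ^ A := by
        rw [Summable.tsum_add hgeo (hind.mul_left _), tsum_mul_left, tsum_mul_left,
          tsum_mul_left, tsum_geometric_inv_two, tsum_geometric_inv_two_ge]
        ring

section Metric

variable {L κ₀ : ℝ}

def nAdist (L κ₀ : ℝ) (u v : Fs L κ₀) (α : ℕ) : ℝ := nA L κ₀ (fun k => u.1 k - v.1 k) α

theorem dF_eq_tsum (u v : Fs L κ₀) : dF L κ₀ u v =
    ∑' β, 1 / 2 ^ (β + 1) * (nAdist L κ₀ u v (β + 1) / (1 + nAdist L κ₀ u v (β + 1))) :=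
  rfl

theorem nAdist_nonneg (u v : Fs L κ₀) (α : ℕ) : 0 ≤ nAdist L κ₀ u v α := nA_nonneg

theorem nAdist_self (u : Fs L κ₀) (α : ℕ) : nAdist L κ₀ u u α = 0 := by
  simp [nAdist, nA, sqA]

theorem nAdist_triangle (u v w : Fs L κ₀) (α : ℕ) :
    nAdist L κ₀ u w α ≤ nAdist L κ₀ u v α + nAdist L κ₀ v w α := by
  have hsplit : (fun k => u.1 k - w.1 k) = (u.1 - v.1) + (v.1 - w.1) :=
    funext fun k => (sub_add_sub_cancel _ _ _).symm
  rw [nAdist, hsplit]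
  exact nA_add_le ((u.2.2 α).sub (v.2.2 α)) ((v.2.2 α).sub (w.2.2 α))

theorem summable_dF (u v : Fs L κ₀) :
    Summable fun β => 1 / 2 ^ (β + 1) *
      (nAdist L κ₀ u v (β + 1) / (1 + nAdist L κ₀ u v (β + 1))) :=
  summable_one_div_two_pow_succ.of_nonneg_of_le
    (fun β => mul_nonneg (by positivity) (div_one_add_nonneg (nAdist_nonneg u v _)))
    fun β => mul_le_of_le_one_right (by positivity) (div_one_add_le_one (nAdist_nonneg u v _))

theorem dF_self (u : Fs L κ₀) : dF L κ₀ u u = 0 := by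
  simp [dF_eq_tsum, nAdist_self]

theorem dF_triangle (u v w : Fs L κ₀) : dF L κ₀ u w ≤ dF L κ₀ u v + dF L κ₀ v w := by
  rw [dF_eq_tsum, dF_eq_tsum, dF_eq_tsum,
    ← Summable.tsum_add (summable_dF u v) (summable_dF v w)]
  refine Summable.tsum_le_tsum (fun β => ?_) (summable_dF u w)
    ((summable_dF u v).add (summable_dF v w))
  rw [← mul_add]
  exact mul_le_mul_of_nonneg_left (div_one_add_subadditive (nAdist_nonneg _ _ _)
    (nAdist_nonneg _ _ _) (nAdist_nonneg _ _ _) (nAdist_triangle u v w _)) (by positivity)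

theorem nAdist_lt_one_of_dF_lt {u v : Fs L κ₀} {A : ℕ} (h : dF L κ₀ u v < 1 / 2 ^ (A + 2)) :
    nAdist L κ₀ u v (A + 1) < 1 := by
  set t := nAdist L κ₀ u v (A + 1)
  have ht := nAdist_nonneg u v (A + 1)
  have hterm : 1 / 2 ^ (A + 1) * (t / (1 + t)) ≤ dF L κ₀ u v :=
    (summable_dF u v).le_tsum A fun β _ =>
      mul_nonneg (by positivity) (div_one_add_nonneg (nAdist_nonneg u v _))
  have hhalf : t / (1 + t) < 1 / 2 := by
    have h2 : (1 / 2 ^ (A + 2) : ℝ) = 1 / 2 ^ (A + 1) * (1 / 2) := by ring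
    rw [h2] at h
    exact lt_of_mul_lt_mul_left (hterm.trans_lt h) (by positivity)
  rw [div_lt_iff₀ (by linarith)] at hhalf
  linarith

theorem dF_le_of_nAdist_le {u v : Fs L κ₀} {A : ℕ} {c : ℝ} (hc : 0 ≤ c)
    (h : ∀ β < A, nAdist L κ₀ u v (β + 1) ≤ c) : dF L κ₀ u v ≤ c + 2⁻¹ ^ A :=
  tsum_one_div_two_pow_succ_mul_le hc (fun _ => div_one_add_nonneg (nAdist_nonneg u v _))
    (fun _ => div_one_add_le_one (nAdist_nonneg u v _))
    fun β hβ => (div_le_self (nAdist_nonneg u v _)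
      (le_add_of_nonneg_right (nAdist_nonneg u v _))).trans (h β hβ)

end Metric

section Topology

variable {L κ₀ : ℝ}

theorem isOpen_setOf_dF_lt (x : Fs L κ₀) (r : ℝ) : IsOpen {y | dF L κ₀ x y < r} :=
  TopologicalSpace.isOpen_generateFrom_of_mem ⟨x, r, rfl⟩

theorem exists_dF_ball_subset_of_isOpen {U : Set (Fs L κ₀)} (hU : IsOpen U) :
    ∀ x ∈ U, ∃ r > 0, {y | dF L κ₀ x y < r} ⊆ U := by
  induction hU with
  | basic s hs =>
    obtain ⟨c, r, rfl⟩ := hs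
    intro x (hx : dF L κ₀ c x < r)
    refine ⟨r - dF L κ₀ c x, sub_pos.2 hx, fun y (hy : dF L κ₀ x y < _) => ?_⟩
    exact (dF_triangle c x y).trans_lt (by linarith)
  | univ => exact fun _ _ => ⟨1, one_pos, Set.subset_univ _⟩
  | inter s t _ _ ihs iht =>
    intro x hx
    obtain ⟨r₁, hr₁, h₁⟩ := ihs x hx.1
    obtain ⟨r₂, hr₂, h₂⟩ := iht x hx.2
    refine ⟨min r₁ r₂, lt_min hr₁ hr₂, fun y (hy : dF L κ₀ x y < min r₁ r₂) => ?_⟩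
    exact ⟨h₁ (show dF L κ₀ x y < r₁ from hy.trans_le (min_le_left _ _)),
      h₂ (show dF L κ₀ x y < r₂ from hy.trans_le (min_le_right _ _))⟩
  | sUnion S _ ih =>
    rintro x ⟨s, hsS, hxs⟩
    obtain ⟨r, hr, h⟩ := ih s hsS x hxs
    exact ⟨r, hr, h.trans (Set.subset_sUnion_of_mem hsS)⟩

theorem closure_subset_setOf_nA_le {S : Set (Fs L κ₀)} {C : ℕ → ℝ}
    (hS : ∀ u ∈ S, ∀ A, nA L κ₀ u.1 (A + 1) ≤ C A) :
    closure S ⊆ {u | ∀ A, nA L κ₀ u.1 (A + 1) ≤ C A + 1} := by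
  intro u hu A
  obtain ⟨w, hw, hwS⟩ := mem_closure_iff.1 hu _ (isOpen_setOf_dF_lt u (1 / 2 ^ (A + 2)))
    (by show dF L κ₀ u u < _; rw [dF_self]; positivity)
  have hsplit : u.1 = (fun k => u.1 k - w.1 k) + w.1 := funext fun k => (sub_add_cancel _ _).symm
  calc nA L κ₀ u.1 (A + 1) ≤ nAdist L κ₀ u w (A + 1) + nA L κ₀ w.1 (A + 1) := by
        rw [nAdist]
        conv_lhs => rw [hsplit]
        exact nA_add_le ((u.2.2 _).sub (w.2.2 _)) (w.2.2 _)
    _ ≤ C A + 1 := by linarith [nAdist_lt_one_of_dF_lt hw, hS w hwS A]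

end Topology

section ShearFlow

variable {L κ₀ : ℝ}

theorem InH.add {u v : ℤ × ℤ → Vc} (hu : InH u) (hv : InH v) : InH (u + v) := by
  obtain ⟨hu₀, hur, hud⟩ := hu
  obtain ⟨hv₀, hvr, hvd⟩ := hv
  refine ⟨by simp [hu₀, hv₀], fun k i => ?_, fun k => ?_⟩
  · simp only [Pi.add_apply, PiLp.add_apply, map_add, hur k i, hvr k i]
  · simp only [Pi.add_apply, PiLp.add_apply]
    linear_combination hud k + hvd k

def shearModes (N : ℕ) : Finset (ℤ × ℤ) := {((N : ℤ), 0), (-(N : ℤ), 0)}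

/-- Fourier coefficients of the shear flow `(0, 2ε cos(κ₀ N x₁))`. -/
def shearFlow (ε : ℝ) (N : ℕ) (k : ℤ × ℤ) : Vc :=
  if k ∈ shearModes N then PiLp.single 2 1 (ε : ℂ) else 0

theorem neg_mem_shearModes {N : ℕ} {k : ℤ × ℤ} : -k ∈ shearModes N ↔ k ∈ shearModes N := by
  obtain ⟨k₁, k₂⟩ := k
  simp only [shearModes, Finset.mem_insert, Finset.mem_singleton, Prod.neg_mk, Prod.mk.injEq]
  omega

theorem InH_shearFlow (ε : ℝ) {N : ℕ} (hN : N ≠ 0) : InH (shearFlow ε N) := by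
  refine ⟨?_, fun k i => ?_, fun k => ?_⟩
  · have h0 : (0 : ℤ × ℤ) ∉ shearModes N := by
      simp [shearModes, Prod.ext_iff, eq_comm (a := (0 : ℤ)), hN]
    simp [shearFlow, h0]
  · by_cases hk : k ∈ shearModes N
    · fin_cases i <;> simp [shearFlow, hk, neg_mem_shearModes.2 hk]
    · simp [shearFlow, hk, mt neg_mem_shearModes.1 hk]
  · by_cases hk : k ∈ shearModes N
    · have hk₂ : k.2 = 0 := by
        simp only [shearModes, Finset.mem_insert, Finset.mem_singleton] at hk
        rcases hk with rfl | rfl <;> rfl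
      simp [shearFlow, hk, hk₂]
    · simp [shearFlow, hk]

theorem summableA_shearFlow (ε : ℝ) (N α : ℕ) : SummableA κ₀ (shearFlow ε N) α :=
  summable_of_ne_finset_zero (s := shearModes N) fun k hk => by simp [shearFlow, hk]

theorem knorm_of_mem_shearModes {N : ℕ} {k : ℤ × ℤ} (hk : k ∈ shearModes N) : knorm k = N := by
  simp only [shearModes, Finset.mem_insert, Finset.mem_singleton] at hk
  rcases hk with rfl | rfl <;> simp [knorm]

theorem nA_shearFlow (hκ : 0 ≤ κ₀) {ε : ℝ} (hε : 0 ≤ ε) {N : ℕ} (hN : N ≠ 0) (α : ℕ) :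
    nA L κ₀ (shearFlow ε N) α = |L| * √2 * ε * (κ₀ * N) ^ α := by
  have hsupp : ∀ k ∉ shearModes N, (κ₀ * knorm k) ^ (2 * α) * ‖shearFlow ε N k‖ ^ 2 = 0 :=
    fun k hk => by simp [shearFlow, hk]
  have hcard : (shearModes N).card = 2 := Finset.card_pair (by simpa using hN)
  have hsq : sqA L κ₀ (shearFlow ε N) α = (|L| * √2 * ε * (κ₀ * N) ^ α) ^ 2 := by
    rw [sqA, tsum_eq_sum hsupp, Finset.sum_congr rfl fun k hk => by
      rw [knorm_of_mem_shearModes hk, shearFlow, if_pos hk]]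
    simp only [Finset.sum_const, hcard, PiLp.norm_single, Complex.norm_real, Real.norm_eq_abs]
    simp only [nsmul_eq_mul, mul_pow, sq_abs, Real.sq_sqrt zero_le_two, ← pow_mul, mul_comm α]
    push_cast
    ring
  rw [nA, hsq, Real.sqrt_sq (by positivity)]

end ShearFlow

section Perturbation

variable {L κ₀ : ℝ}

def addShearFlow (x : Fs L κ₀) (ε : ℝ) {N : ℕ} (hN : N ≠ 0) : Fs L κ₀ :=
  ⟨x.1 + shearFlow ε N, x.2.1.add (InH_shearFlow ε hN),
    fun α => (x.2.2 α).add (summableA_shearFlow ε N α)⟩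

variable (x : Fs L κ₀) (ε : ℝ) {N : ℕ} (hN : N ≠ 0) (α : ℕ)

theorem nAdist_addShearFlow :
    nAdist L κ₀ x (addShearFlow x ε hN) α = nA L κ₀ (shearFlow ε N) α := by
  have h : (fun k => x.1 k - (addShearFlow x ε hN).1 k) = -shearFlow ε N :=
    funext fun k => sub_add_cancel_left _ _
  rw [nAdist, h, nA_neg]

theorem nA_shearFlow_le :
    nA L κ₀ (shearFlow ε N) α ≤ nA L κ₀ (addShearFlow x ε hN).1 α + nA L κ₀ x.1 α := by
  have h : shearFlow ε N = (addShearFlow x ε hN).1 + -x.1 := by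
    rw [addShearFlow, add_neg_cancel_comm]
  calc nA L κ₀ (shearFlow ε N) α = nA L κ₀ ((addShearFlow x ε hN).1 + -x.1) α := by rw [← h]
    _ ≤ nA L κ₀ (addShearFlow x ε hN).1 α + nA L κ₀ (-x.1) α :=
        nA_add_le ((addShearFlow x ε hN).2.2 α) (x.2.2 α).neg
    _ = _ := by rw [nA_neg]

end Perturbation

/-- The witness is `x` plus a shear flow of frequency `N` and amplitude `ε`: the levels `≤ A`
of `d` see `ε (κ₀ N) ^ A`, the level `A + 1` one more factor `κ₀ N`, and the levels above `A`
cost at most `2⁻¹ ^ A`. -/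
theorem exists_dF_lt_and_lt_nA {L κ₀ : ℝ} (hL : L ≠ 0) (hκ : 0 < κ₀) (x : Fs L κ₀) {r : ℝ}
    {A : ℕ} (hA : 2⁻¹ ^ A < r / 2) (C : ℝ) :
    ∃ v : Fs L κ₀, dF L κ₀ x v < r ∧ C < nA L κ₀ v.1 (A + 1) := by
  have hr : 0 < r := by linarith [pow_pos (by norm_num : (0 : ℝ) < 2⁻¹) A]
  obtain ⟨N, hN⟩ := exists_nat_gt (max (1 / κ₀) (4 * (C + nA L κ₀ x.1 (A + 1)) / (r * κ₀)))
  rw [max_lt_iff, div_lt_iff₀ hκ, div_lt_iff₀ (by positivity)] at hN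
  set q := κ₀ * N
  have hq : 1 ≤ q := by linarith
  have hN0 : N ≠ 0 := by rintro rfl; norm_num [q] at hq
  have hs : 0 < |L| * √2 := by positivity
  set ε := r / (4 * (|L| * √2) * q ^ A) with hε
  have hnA : ∀ β, nA L κ₀ (shearFlow ε N) β = r / 4 * (q ^ β / q ^ A) := fun β => by
    rw [nA_shearFlow hκ.le (by positivity) hN0]
    change |L| * √2 * ε * q ^ β = _
    rw [hε]
    field_simp
  refine ⟨addShearFlow x ε hN0, ?_, ?_⟩
  · have hle : dF L κ₀ x (addShearFlow x ε hN0) ≤ r / 4 + 2⁻¹ ^ A := by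
      refine dF_le_of_nAdist_le (by positivity) fun β hβ => ?_
      rw [nAdist_addShearFlow, hnA]
      exact mul_le_of_le_one_right (by positivity)
        ((div_le_one (by positivity)).2 (pow_le_pow_right₀ hq hβ))
    linarith
  · have := nA_shearFlow_le x ε hN0 (A + 1)
    rw [hnA, pow_succ, mul_div_cancel_left₀ _ (by positivity)] at this
    linarith [show (N : ℝ) * (r * κ₀) = r * q by ring]

theorem interior_setOf_forall_nA_le_eq_empty {L κ₀ : ℝ} (hL : L ≠ 0) (hκ : 0 < κ₀)
    (C : ℕ → ℝ) : interior {u : Fs L κ₀ | ∀ A, nA L κ₀ u.1 (A + 1) ≤ C A} = ∅ := by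
  refine Set.eq_empty_of_forall_notMem fun x hx => ?_
  obtain ⟨r, hr, hball⟩ := exists_dF_ball_subset_of_isOpen isOpen_interior x hx
  obtain ⟨A, hA⟩ := exists_pow_lt_of_lt_one (half_pos hr) (by norm_num : (2⁻¹ : ℝ) < 1)
  obtain ⟨v, hxv, hv⟩ := exists_dF_lt_and_lt_nA hL hκ x hA (C A)
  exact (interior_subset (hball hxv) A).not_gt hv

theorem two_mul_mul_le_sq_div_add {b : ℝ} (hb : 0 < b) (a s : ℝ) :
    2 * a * s ≤ a ^ 2 / (2 * b) + 2 * b * s ^ 2 := by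
  rw [div_add' _ _ _ (by positivity), le_div_iff₀ (by positivity)]
  nlinarith [sq_nonneg (a - 2 * b * s)]

theorem knorm_pow_le_exp_mul_exp {b : ℝ} (hb : 0 < b) (α : ℕ) (k : ℤ × ℤ) :
    knorm k ^ (2 * α) ≤
      Real.exp (α ^ 2 / (2 * b)) * Real.exp (2 * b * Real.log (knorm k + Real.exp 1) ^ 2) := by
  set t := knorm k + Real.exp 1
  have ht : 0 < t := add_pos_of_nonneg_of_pos (Real.sqrt_nonneg _) (Real.exp_pos 1)
  calc knorm k ^ (2 * α) ≤ t ^ (2 * α) :=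
        pow_le_pow_left₀ (Real.sqrt_nonneg _) (le_add_of_nonneg_right (Real.exp_pos 1).le) _
    _ = Real.exp (2 * α * Real.log t) := by
        rw [← Real.exp_log ht, ← Real.exp_nat_mul, Real.log_exp]
        push_cast
        ring
    _ ≤ _ := by
        rw [← Real.exp_add]
        exact Real.exp_le_exp.2 (two_mul_mul_le_sq_div_add hb _ _)

theorem sqA_le_of_mem_EbnSet {L κ₀ b : ℝ} (hb : 0 < b) {n : ℕ} {w : Fs L κ₀}
    (hw : w ∈ EbnSet L κ₀ b n) (α : ℕ) :
    sqA L κ₀ w.1 α ≤ κ₀ ^ (2 * α) * Real.exp (α ^ 2 / (2 * b)) * n ^ 2 := by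
  obtain ⟨hsum, hle⟩ := hw
  set K := κ₀ ^ (2 * α) * Real.exp (α ^ 2 / (2 * b))
  have hK : 0 ≤ K := mul_nonneg (by rw [pow_mul]; positivity) (Real.exp_pos _).le
  have hterm : ∀ k, (κ₀ * knorm k) ^ (2 * α) * ‖w.1 k‖ ^ 2 ≤ K * ebTerm b w.1 k := fun k =>
    calc (κ₀ * knorm k) ^ (2 * α) * ‖w.1 k‖ ^ 2
        = κ₀ ^ (2 * α) * knorm k ^ (2 * α) * ‖w.1 k‖ ^ 2 := by rw [mul_pow]
      _ ≤ κ₀ ^ (2 * α) * (Real.exp (α ^ 2 / (2 * b)) *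
            Real.exp (2 * b * Real.log (knorm k + Real.exp 1) ^ 2)) * ‖w.1 k‖ ^ 2 := by
          gcongr
          · rw [pow_mul]; positivity
          · exact knorm_pow_le_exp_mul_exp hb α k
      _ = K * ebTerm b w.1 k := by rw [ebTerm]; ring
  have hEb : L ^ 2 * ∑' k, ebTerm b w.1 k ≤ n ^ 2 := by
    rw [← Real.sqrt_le_left (by positivity)]
    exact hle
  calc sqA L κ₀ w.1 α ≤ L ^ 2 * ∑' k, K * ebTerm b w.1 k :=
        mul_le_mul_of_nonneg_left (Summable.tsum_le_tsum hterm (w.2.2 α) (hsum.mul_left K))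
          (sq_nonneg L)
    _ = K * (L ^ 2 * ∑' k, ebTerm b w.1 k) := by rw [tsum_mul_left]; ring
    _ ≤ K * n ^ 2 := mul_le_mul_of_nonneg_left hEb hK

/-- For every `b > 0` and `n ∈ ℕ`, the set
`E_{b,n} = {u ∈ E_b : |u|_b ≤ n}` is nowhere dense in the metric space `(F, d)`,
i.e. its closure has empty interior. -/
theorem Ebn_nowhere_dense (L κ₀ : ℝ) (hL : 0 < L) (hκ₀ : κ₀ = 2 * Real.pi / L)
    (b : ℝ) (hb : 0 < b) (n : ℕ) :
    IsNowhereDense (EbnSet L κ₀ b n) := by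
  have hκ : 0 < κ₀ := hκ₀ ▸ div_pos (by positivity) hL
  have hclosure := closure_subset_setOf_nA_le (S := EbnSet L κ₀ b n)
    fun w hw A => Real.sqrt_le_sqrt (sqA_le_of_mem_EbnSet hb hw (A + 1))
  exact Set.subset_eq_empty (interior_mono hclosure)
    (interior_setOf_forall_nA_le_eq_empty hL.ne' hκ _)
end
end

section
/- For all real numbers s, t with 1 ≤ s ≤ t, one has (ln(s+t+e))² − (ln(t+e))² ≤ (ln(2s+e))² − (ln(s+e))² ≤ (ln 2)·(ln 2 + 2 ln(s+e)). -/
/-!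
On `[e, ∞)` the derivative `2 log x / x` of `log²` is decreasing, so `log²` is concave there, and
a concave function has decreasing increments over steps of a fixed length. Comparing the steps of
length `s` starting at `s + e ≤ t + e` gives the first inequality. The second follows from
`2s + e ≤ 2(s + e)`, i.e. `0 ≤ log (2s + e) ≤ log 2 + log (s + e)`, after squaring.
-/

open Real Set

theorem ConcaveOn.sub_le_sub_of_le {𝕜 : Type*} [Field 𝕜] [LinearOrder 𝕜] [IsStrictOrderedRing 𝕜]
    {s : Set 𝕜} {f : 𝕜 → 𝕜} (hf : ConcaveOn 𝕜 s f) {x y a : 𝕜} (hx : x ∈ s) (hya : y + a ∈ s)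
    (hxy : x ≤ y) (ha : 0 ≤ a) : f (y + a) - f y ≤ f (x + a) - f x := by
  rcases ha.eq_or_lt with rfl | ha
  · simp
  have hxa : x + a ∈ s := hf.1.ordConnected.out hx hya ⟨by linarith, by linarith⟩
  have hy : y ∈ s := hf.1.ordConnected.out hx hya ⟨hxy, by linarith⟩
  have hslope : slope f y (y + a) ≤ slope f x (x + a) :=
    calc slope f y (y + a) = slope f (y + a) y := slope_comm f _ _
      _ ≤ slope f (y + a) x :=
        hf.slope_anti hya ⟨hx, (by linarith : x < y + a).ne⟩ ⟨hy, (by linarith : y < y + a).ne⟩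
          hxy
      _ = slope f x (y + a) := slope_comm f _ _
      _ ≤ slope f x (x + a) :=
        hf.slope_anti hx ⟨hxa, (by linarith : x < x + a).ne'⟩ ⟨hya, (by linarith : x < y + a).ne'⟩
          (by linarith)
  rw [slope_def_field, slope_def_field, add_sub_cancel_left, add_sub_cancel_left] at hslope
  exact (div_le_div_iff_of_pos_right ha).mp hslope

theorem Real.hasDerivAt_log_sq {x : ℝ} (hx : x ≠ 0) :
    HasDerivAt (fun y ↦ log y ^ 2) (2 * (log x / x)) x :=
  ((hasDerivAt_log hx).fun_pow 2).congr_deriv (by norm_num; ring)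

theorem Real.concaveOn_log_sq : ConcaveOn ℝ (Ici (exp 1)) (fun x ↦ log x ^ 2) := by
  have hpos : ∀ x ∈ Ioi (exp 1), x ≠ 0 := fun x hx ↦ ((exp_pos 1).trans hx).ne'
  refine AntitoneOn.concaveOn_of_deriv (convex_Ici _) ?_ ?_ ?_
  · exact (continuousOn_log.mono fun x hx ↦ ((exp_pos 1).trans_le hx).ne').pow 2
  · rw [interior_Ici]
    exact fun x hx ↦ (hasDerivAt_log_sq (hpos x hx)).differentiableAt.differentiableWithinAt
  · rw [interior_Ici]
    intro x hx y hy hxy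
    rw [(hasDerivAt_log_sq (hpos x hx)).deriv, (hasDerivAt_log_sq (hpos y hy)).deriv]
    exact mul_le_mul_of_nonneg_left
      (log_div_self_antitoneOn (Ioi_subset_Ici_self hx) (Ioi_subset_Ici_self hy) hxy) zero_le_two

theorem Real.log_sq_sub_log_sq_le {x y c : ℝ} (hx : 0 < x) (hc : 0 < c) (hy : 1 ≤ y)
    (hyx : y ≤ c * x) : log y ^ 2 - log x ^ 2 ≤ log c * (log c + 2 * log x) := by
  have hlog : log y ≤ log c + log x := by
    rw [← log_mul hc.ne' hx.ne']
    exact log_le_log (by linarith) hyx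
  have hsq : log y ^ 2 ≤ (log c + log x) ^ 2 := pow_le_pow_left₀ (log_nonneg hy) hlog 2
  linarith

/-- For all real `1 ≤ s ≤ t`,
`(ln(s+t+e))² − (ln(t+e))² ≤ (ln(2s+e))² − (ln(s+e))² ≤ (ln 2)(ln 2 + 2 ln(s+e))`. -/
theorem log_sq_difference_bounds (s t : ℝ) (hs : 1 ≤ s) (hst : s ≤ t) :
    Real.log (s + t + Real.exp 1) ^ 2 - Real.log (t + Real.exp 1) ^ 2 ≤
      Real.log (2 * s + Real.exp 1) ^ 2 - Real.log (s + Real.exp 1) ^ 2 ∧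
    Real.log (2 * s + Real.exp 1) ^ 2 - Real.log (s + Real.exp 1) ^ 2 ≤
      Real.log 2 * (Real.log 2 + 2 * Real.log (s + Real.exp 1)) := by
  have he := exp_pos 1
  constructor
  · have h := concaveOn_log_sq.sub_le_sub_of_le (x := s + exp 1) (y := t + exp 1) (a := s)
      (mem_Ici.2 (by linarith)) (mem_Ici.2 (by linarith)) (by linarith) (by linarith)
    rwa [show t + exp 1 + s = s + t + exp 1 by ring,
      show s + exp 1 + s = 2 * s + exp 1 by ring] at h
  · exact log_sq_sub_log_sq_le (by linarith) two_pos (by linarith) (by linarith)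
end

section
/- Let V be a real vector space, A : V → V a linear map, B : V × V → V a bilinear map, g ∈ V, and λ, ν, δ₀ ∈ ℝ with A g = λ g and B(g,g) = 0. Define U : ℕ → V by U₀ = 0, U₁ = δ₀ g, U₂ = −(ν δ₀²/2) A g, and for N ≥ 2, U_{N+1} = ((N−1)/(N+1)) U_{N−1} − (ν δ₀/(N+1)) A U_N − (δ₀/(N+1)) Σ_{h+k=N, h,k ≥ 1} B(U_k, U_h). Define p : ℕ → ℝ by p₁ = δ₀, p₂ = −(ν λ δ₀²)/2, and p_{N+1} = ((N−1)/(N+1)) p_{N−1} − (ν δ₀ λ/(N+1)) p_N for N ≥ 2. Then U_n = p_n g for every n ≥ 1. -/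
/-!
The line `ℝ g` is invariant under `A` and `B` vanishes on it, so as long as all earlier
coefficients are multiples of `g`, the quadratic convolution term of the recursion drops out
and the remaining linear terms reproduce the scalar recursion for `p`; strong induction on `n`.
-/

open Finset

theorem LinearMap.sum_Ico_apply_sub_eq_zero_of_eq_smul {R M P : Type*} [CommSemiring R]
    [AddCommMonoid M] [Module R M] [AddCommMonoid P] [Module R P]
    (B : M →ₗ[R] M →ₗ[R] P) {g : M} (hB : B g g = 0) (U : ℕ → M) (c : ℕ → R) (N : ℕ)
    (hU : ∀ k, 1 ≤ k → k < N → U k = c k • g) :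
    ∑ k ∈ Ico 1 N, B (U k) (U (N - k)) = 0 := by
  refine sum_eq_zero fun k hk => ?_
  obtain ⟨hk1, hkN⟩ := mem_Ico.mp hk
  rw [hU k hk1 hkN, hU (N - k) (by omega) (by omega)]
  simp only [map_smul, LinearMap.smul_apply, hB, smul_zero]

theorem taylor_coefficients_eigenvector_general (V : Type*) [AddCommGroup V] [Module ℝ V]
    (A : V →ₗ[ℝ] V) (B : V →ₗ[ℝ] V →ₗ[ℝ] V) (g : V) (lam ν δ₀ : ℝ)
    (hA : A g = lam • g) (hB : B g g = 0)
    (U : ℕ → V) (p : ℕ → ℝ)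
    (hU1 : U 1 = δ₀ • g) (hU2 : U 2 = -(ν * δ₀ ^ 2 / 2) • A g)
    (hUrec : ∀ N : ℕ, 2 ≤ N →
      U (N + 1) = (((N : ℝ) - 1) / ((N : ℝ) + 1)) • U (N - 1)
        - (ν * δ₀ / ((N : ℝ) + 1)) • A (U N)
        - (δ₀ / ((N : ℝ) + 1)) • ∑ k ∈ Finset.Ico 1 N, B (U k) (U (N - k)))
    (hp1 : p 1 = δ₀) (hp2 : p 2 = -(ν * lam * δ₀ ^ 2) / 2)
    (hprec : ∀ N : ℕ, 2 ≤ N →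
      p (N + 1) = (((N : ℝ) - 1) / ((N : ℝ) + 1)) * p (N - 1)
        - (ν * δ₀ * lam / ((N : ℝ) + 1)) * p N) :
    ∀ n : ℕ, 1 ≤ n → U n = p n • g := by
  intro n hn
  induction n using Nat.strong_induction_on with
  | _ n ih =>
  match n, hn with
  | 1, _ => rw [hU1, hp1]
  | 2, _ => rw [hU2, hp2, hA, smul_smul]; ring_nf
  | N + 3, _ =>
    have hconv := B.sum_Ico_apply_sub_eq_zero_of_eq_smul hB U p (N + 2)
      fun k hk1 hkN => ih k (by omega) hk1
    rw [hUrec (N + 2) (by omega), hconv, ih (N + 2 - 1) (by omega) (by omega),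
      ih (N + 2) (by omega) (by omega), hprec (N + 2) (by omega), map_smul, hA]
    module

/-- If `A g = λ g` and `B(g,g) = 0`, then the Taylor coefficients
`U_n` of the recursion satisfy `U_n = p_n(λ) g` for all `n ≥ 1`, where `p_n` is the
scalar recursion. -/
theorem taylor_coefficients_eigenvector (V : Type*) [AddCommGroup V] [Module ℝ V]
    (A : V →ₗ[ℝ] V) (B : V →ₗ[ℝ] V →ₗ[ℝ] V) (g : V) (lam ν δ₀ : ℝ)
    (hA : A g = lam • g) (hB : B g g = 0)
    (U : ℕ → V) (p : ℕ → ℝ)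
    (hU0 : U 0 = 0) (hU1 : U 1 = δ₀ • g) (hU2 : U 2 = -(ν * δ₀ ^ 2 / 2) • A g)
    (hUrec : ∀ N : ℕ, 2 ≤ N →
      U (N + 1) = (((N : ℝ) - 1) / ((N : ℝ) + 1)) • U (N - 1)
        - (ν * δ₀ / ((N : ℝ) + 1)) • A (U N)
        - (δ₀ / ((N : ℝ) + 1)) • ∑ k ∈ Finset.Ico 1 N, B (U k) (U (N - k)))
    (hp1 : p 1 = δ₀) (hp2 : p 2 = -(ν * lam * δ₀ ^ 2) / 2)
    (hprec : ∀ N : ℕ, 2 ≤ N →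
      p (N + 1) = (((N : ℝ) - 1) / ((N : ℝ) + 1)) * p (N - 1)
        - (ν * δ₀ * lam / ((N : ℝ) + 1)) * p N) :
    ∀ n : ℕ, 1 ≤ n → U n = p n • g :=
  taylor_coefficients_eigenvector_general V A B g lam ν δ₀ hA hB U p hU1 hU2 hUrec hp1 hp2 hprec
end
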